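/- arXiv:2505.12223 — 8 statements merged into one kernel-verified Lean document; each statement's English description precedes it below -/
import Mathlib

section
/- Let I₁ = {i : ξ¹_i = ξ²_i}, I₂ = {i : ξ¹_i ≠ ξ²_i}, and assume ξ¹ ≠ ±ξ² so I₁, I₂ ≠ ∅. Then every x ∈ ℝ^N with x_i = 0 for i ∉ I₁ and Σ_{i∈I₁} x_i = 0 is an eigenvector of the Jacobian J_{ξ¹} with eigenvalue −2(|I₁|/N + ε). -/
/-!
Write `s = ξ¹ * ξ²`, so that `s = 1` exactly on `I₁`. Since `(ξ¹_i)² = 1`, the Jacobian is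
`-(1/N)` times the Laplacian `diagonal (W *ᵥ 1) - W` of the weights `W i j = 1 + 2ε + s_i s_j`.
For `x` supported on `I₁` with zero sum, both `∑ x_j` and `∑ s_j x_j` vanish, so `W *ᵥ x = 0` and
the Laplacian multiplies `x` by the row sums of `W`, which on `I₁` all equal
`(1 + 2ε) N + ∑ s = 2εN + 2|I₁|`.
-/

open Finset Matrix

theorem mul_eq_ite_of_sign {R : Type*} [Ring R] [DecidableEq R] [CharZero R] {a b : R}
    (ha : a = 1 ∨ a = -1) (hb : b = 1 ∨ b = -1) : a * b = if a = b then 1 else -1 := by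
  rcases ha with rfl | rfl <;> rcases hb with rfl | rfl <;> norm_num

section

variable {ι R : Type*} [Fintype ι] [CommRing R]

theorem sum_sign_mul_eq [DecidableEq R] [CharZero R] {ξ ζ : ι → R}
    (hξ : ∀ i, ξ i = 1 ∨ ξ i = -1) (hζ : ∀ i, ζ i = 1 ∨ ζ i = -1) :
    ∑ i, ξ i * ζ i = 2 * #{i | ξ i = ζ i} - Fintype.card ι := by
  have hcard := card_filter_add_card_filter_not (s := univ) (fun i => ξ i = ζ i)
  rw [card_univ] at hcard
  rw [sum_congr rfl fun i _ => mul_eq_ite_of_sign (hξ i) (hζ i), sum_ite, sum_const, sum_const,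
    ← hcard]
  push_cast
  simp only [nsmul_eq_mul, mul_one, mul_neg_one]
  ring

theorem Matrix.mulVec_of_const_add_mul (a : R) (s x : ι → R) (i : ι) :
    ((of fun i j => a + s i * s j) *ᵥ x) i = a * ∑ j, x j + s i * (s ⬝ᵥ x) := by
  simp only [mulVec, dotProduct, of_apply, add_mul, sum_add_distrib, mul_sum, mul_assoc]

variable [DecidableEq ι]

def Matrix.laplacian (W : Matrix ι ι R) : Matrix ι ι R := diagonal (W *ᵥ 1) - W

theorem Matrix.laplacian_apply (W : Matrix ι ι R) (i j : ι) :
    W.laplacian i j = if i = j then ∑ k ∈ univ.erase i, W i k else -W i j := by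
  split_ifs with h
  · subst h
    simp [laplacian, mulVec, dotProduct, sum_erase_eq_sub]
  · simp [laplacian, h]

theorem Matrix.laplacian_of_const_add_mul_mulVec {a : R} {s x : ι → R}
    (hs : ∀ i, x i ≠ 0 → s i = 1) (hx : ∑ i, x i = 0) :
    (of fun i j => a + s i * s j).laplacian *ᵥ x = (a * Fintype.card ι + ∑ i, s i) • x := by
  have hsx_apply : ∀ i, s i * x i = x i := fun i => by
    by_cases h : x i = 0
    · simp [h]
    · rw [hs i h, one_mul]
  have hsx : s ⬝ᵥ x = 0 := by simp only [dotProduct, hsx_apply, hx]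
  ext i
  rw [laplacian, sub_mulVec, Pi.sub_apply, mulVec_diagonal, mulVec_of_const_add_mul,
    mulVec_of_const_add_mul, hx, hsx, Pi.smul_apply, smul_eq_mul, dotProduct_one]
  simp only [Pi.one_apply, sum_const, card_univ, nsmul_eq_mul, mul_one]
  linear_combination (∑ j, s j) * hsx_apply i

end

theorem jacobian_eq_neg_smul_laplacian {N : ℕ} {c : ℝ} (A : Matrix (Fin N) (Fin N) ℝ)
    {J : Matrix (Fin N) (Fin N) ℝ}
    (hJ : ∀ i j, J i j =
      if i = j then -(1 / N) * (∑ k ∈ univ.erase i, A i k) - c * (N - 1) / N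
      else (1 / N) * A i j + c / N) :
    J = -(N : ℝ)⁻¹ • (of fun i j => A i j + c).laplacian := by
  ext i j
  rw [hJ, Matrix.smul_apply, laplacian_apply]
  split_ifs
  · simp only [of_apply, sum_add_distrib, sum_const, card_erase_of_mem (mem_univ i), card_univ,
      Fintype.card_fin]
    rw [nsmul_eq_mul, Nat.cast_sub (Nat.one_le_of_lt i.pos), smul_eq_mul]
    ring
  · rw [of_apply, smul_eq_mul]
    ring

theorem stmt_4_general (N : ℕ) (hN : 1 ≤ N) (ε : ℝ) (ξ1 ξ2 : Fin N → ℝ)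
    (hξ1 : ∀ i, ξ1 i = 1 ∨ ξ1 i = -1) (hξ2 : ∀ i, ξ2 i = 1 ∨ ξ2 i = -1)
    (C : Matrix (Fin N) (Fin N) ℝ) (hC : ∀ i j, C i j = ξ1 i * ξ1 j + ξ2 i * ξ2 j)
    (J : Matrix (Fin N) (Fin N) ℝ)
    (hJ : ∀ i j, J i j =
      if i = j then
        -(1 / N) * (∑ k ∈ Finset.univ.erase i, C i k * ξ1 i * ξ1 k) - 2 * ε * (N - 1) / N
      else (1 / N) * (C i j * ξ1 i * ξ1 j) + 2 * ε / N)
    (x : Fin N → ℝ)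
    (hx0 : ∀ i, ξ1 i ≠ ξ2 i → x i = 0)
    (hxs : ∑ i ∈ Finset.univ.filter (fun i => ξ1 i = ξ2 i), x i = 0) :
    J.mulVec x =
      (-2 * (((Finset.univ.filter (fun i => ξ1 i = ξ2 i)).card : ℝ) / N + ε)) • x := by
  have hξ1_sq : ∀ i, ξ1 i * ξ1 i = 1 := fun i => mul_self_eq_one_iff.mpr (hξ1 i)
  have hW : (of fun i j => C i j * ξ1 i * ξ1 j + 2 * ε) =
      of fun i j => (1 + 2 * ε) + (ξ1 * ξ2) i * (ξ1 * ξ2) j := by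
    ext i j
    simp only [of_apply, hC, Pi.mul_apply]
    linear_combination (ξ1 j * ξ1 j) * hξ1_sq i + hξ1_sq j
  have hsupp : ∀ i, x i ≠ 0 → (ξ1 * ξ2) i = 1 := fun i hxi => by
    rw [Pi.mul_apply, ← not_not.mp (mt (hx0 i) hxi), hξ1_sq]
  have hsum : ∑ i, x i = 0 := by
    rw [← hxs, sum_filter_of_ne fun i _ hxi => not_not.mp (mt (hx0 i) hxi)]
  rw [jacobian_eq_neg_smul_laplacian (fun i k => C i k * ξ1 i * ξ1 k) hJ, hW, smul_mulVec,
    laplacian_of_const_add_mul_mulVec hsupp hsum, smul_smul]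
  congr 1
  simp only [Pi.mul_apply, sum_sign_mul_eq hξ1 hξ2, Fintype.card_fin]
  field_simp
  ring

/-- Vectors supported on I₁ with zero sum are eigenvectors of J_{ξ¹} with
eigenvalue −2(|I₁|/N + ε). -/
theorem stmt_4 (N : ℕ) (hN : 1 ≤ N) (ε : ℝ) (ξ1 ξ2 : Fin N → ℝ)
    (hξ1 : ∀ i, ξ1 i = 1 ∨ ξ1 i = -1) (hξ2 : ∀ i, ξ2 i = 1 ∨ ξ2 i = -1)
    (hne : ξ1 ≠ ξ2) (hne' : ξ1 ≠ -ξ2)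
    (C : Matrix (Fin N) (Fin N) ℝ) (hC : ∀ i j, C i j = ξ1 i * ξ1 j + ξ2 i * ξ2 j)
    (J : Matrix (Fin N) (Fin N) ℝ)
    (hJ : ∀ i j, J i j =
      if i = j then
        -(1 / N) * (∑ k ∈ Finset.univ.erase i, C i k * ξ1 i * ξ1 k) - 2 * ε * (N - 1) / N
      else (1 / N) * (C i j * ξ1 i * ξ1 j) + 2 * ε / N)
    (x : Fin N → ℝ)
    (hx0 : ∀ i, ξ1 i ≠ ξ2 i → x i = 0)
    (hxs : ∑ i ∈ Finset.univ.filter (fun i => ξ1 i = ξ2 i), x i = 0) :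
    J.mulVec x =
      (-2 * (((Finset.univ.filter (fun i => ξ1 i = ξ2 i)).card : ℝ) / N + ε)) • x :=
  stmt_4_general N hN ε ξ1 ξ2 hξ1 hξ2 C hC J hJ x hx0 hxs
end

section
/- Let I₁ = {i : ξ¹_i = ξ²_i} and I₂ = {i : ξ¹_i ≠ ξ²_i}, both nonempty. Define x* ∈ ℝ^N by x*_i = |I₂| for i ∈ I₁ and x*_i = −|I₁| for i ∈ I₂. Then x* is an eigenvector of the Jacobian J_{ξ¹} with eigenvalue −2ε. -/
/-!
Write `Jξ¹ = A / N + (2ε / N) (𝟙𝟙ᵀ - N·I)` where `A` has off-diagonal entries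
`Aᵢⱼ = Cᵢⱼ ξ¹ᵢ ξ¹ⱼ` and zero row sums. Then
`(J x)ᵢ = (1/N) ∑_{j ≠ i} Aᵢⱼ (xⱼ - xᵢ) + (2ε/N) ∑ⱼ xⱼ - 2ε xᵢ`.
The entries of `x*` sum to `|I₁||I₂| - |I₂||I₁| = 0`, and every term `Aᵢⱼ (xⱼ - xᵢ)` vanishes:
either `i, j` lie in the same class `I₁` or `I₂`, so `xⱼ = xᵢ`, or they do not, and then
`ξ¹ᵢ ξ¹ⱼ + ξ²ᵢ ξ²ⱼ = 0`.
-/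

open Finset Matrix

section

variable {n R : Type*} [Fintype n] [CommRing R]

theorem sum_ite_card_filter_eq_zero (p : n → Prop) [DecidablePred p] :
    ∑ i, (if p i then (#{j | ¬p j} : R) else -(#{j | p j} : R)) = 0 := by
  rw [sum_ite, sum_const, sum_const, nsmul_eq_mul, nsmul_eq_mul, mul_neg, mul_comm]
  exact add_neg_cancel _

variable [DecidableEq n] in
theorem mulVec_apply_of_laplacian_add_const (a : n → n → R) (c : R) (J : Matrix n n R)
    (hJ : ∀ i j, J i j =
      if i = j then -(∑ k ∈ univ.erase i, a i k) - c * ((Fintype.card n : R) - 1)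
      else a i j + c)
    (x : n → R) (i : n) :
    (J *ᵥ x) i = ∑ j ∈ univ.erase i, a i j * (x j - x i) + c * ∑ j, x j
      - c * Fintype.card n * x i := by
  have hoff : ∑ j ∈ univ.erase i, J i j * x j = ∑ j ∈ univ.erase i, (a i j + c) * x j :=
    sum_congr rfl fun j hj => by rw [hJ, if_neg (ne_of_mem_erase hj).symm]
  rw [mulVec, dotProduct, ← add_sum_erase _ _ (mem_univ i), hoff, hJ, if_pos rfl,
    ← add_sum_erase _ x (mem_univ i)]
  simp only [add_mul, mul_sub, sum_add_distrib, sum_sub_distrib, ← sum_mul, ← mul_sum]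
  ring

end

theorem mul_add_mul_eq_zero_of_sign {a b c d : ℝ} (ha : a = 1 ∨ a = -1) (hb : b = 1 ∨ b = -1)
    (hc : c = 1 ∨ c = -1) (hd : d = 1 ∨ d = -1) (h : ¬((a = b) ↔ (c = d))) :
    a * c + b * d = 0 := by
  rcases ha with rfl | rfl <;> rcases hb with rfl | rfl <;> rcases hc with rfl | rfl <;>
    rcases hd with rfl | rfl <;> norm_num at *

theorem stmt_5_general (N : ℕ) (ε : ℝ) (ξ1 ξ2 : Fin N → ℝ)
    (hξ1 : ∀ i, ξ1 i = 1 ∨ ξ1 i = -1) (hξ2 : ∀ i, ξ2 i = 1 ∨ ξ2 i = -1)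
    (C : Matrix (Fin N) (Fin N) ℝ) (hC : ∀ i j, C i j = ξ1 i * ξ1 j + ξ2 i * ξ2 j)
    (J : Matrix (Fin N) (Fin N) ℝ)
    (hJ : ∀ i j, J i j =
      if i = j then
        -(1 / N) * (∑ k ∈ Finset.univ.erase i, C i k * ξ1 i * ξ1 k) - 2 * ε * (N - 1) / N
      else (1 / N) * (C i j * ξ1 i * ξ1 j) + 2 * ε / N)
    (x : Fin N → ℝ)
    (hx : ∀ i, x i =
      if ξ1 i = ξ2 i then ((Finset.univ.filter (fun j => ξ1 j ≠ ξ2 j)).card : ℝ)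
      else -((Finset.univ.filter (fun j => ξ1 j = ξ2 j)).card : ℝ)) :
    J.mulVec x = (-2 * ε) • x := by
  funext i
  have hN : (N : ℝ) ≠ 0 := Nat.cast_ne_zero.mpr (Fin.pos i).ne'
  have hJ' : ∀ i j, J i j =
      if i = j then -(∑ k ∈ univ.erase i, 1 / N * (C i k * ξ1 i * ξ1 k))
        - 2 * ε / N * ((Fintype.card (Fin N) : ℝ) - 1)
      else 1 / N * (C i j * ξ1 i * ξ1 j) + 2 * ε / N := by
    intro i j
    rw [hJ, ← mul_sum, Fintype.card_fin]
    split_ifs <;> ring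
  have hsum : ∑ j, x j = 0 := by
    simp only [hx]
    exact sum_ite_card_filter_eq_zero (fun j => ξ1 j = ξ2 j)
  have hterm : ∀ j, 1 / N * (C i j * ξ1 i * ξ1 j) * (x j - x i) = 0 := by
    intro j
    by_cases h : (ξ1 i = ξ2 i) ↔ (ξ1 j = ξ2 j)
    · have hxji : x j = x i := by simp only [hx, h]
      rw [hxji, sub_self, mul_zero]
    · rw [hC, mul_add_mul_eq_zero_of_sign (hξ1 i) (hξ2 i) (hξ1 j) (hξ2 j) h]
      ring
  rw [mulVec_apply_of_laplacian_add_const _ _ J hJ' x i, sum_eq_zero fun j _ => hterm j, hsum,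
    Fintype.card_fin, Pi.smul_apply, smul_eq_mul]
  field_simp
  ring

/-- The vector x* (= |I₂| on I₁, −|I₁| on I₂) is an eigenvector of J_{ξ¹}
with eigenvalue −2ε. -/
theorem stmt_5 (N : ℕ) (hN : 1 ≤ N) (ε : ℝ) (ξ1 ξ2 : Fin N → ℝ)
    (hξ1 : ∀ i, ξ1 i = 1 ∨ ξ1 i = -1) (hξ2 : ∀ i, ξ2 i = 1 ∨ ξ2 i = -1)
    (hne : ξ1 ≠ ξ2) (hne' : ξ1 ≠ -ξ2)
    (C : Matrix (Fin N) (Fin N) ℝ) (hC : ∀ i j, C i j = ξ1 i * ξ1 j + ξ2 i * ξ2 j)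
    (J : Matrix (Fin N) (Fin N) ℝ)
    (hJ : ∀ i j, J i j =
      if i = j then
        -(1 / N) * (∑ k ∈ Finset.univ.erase i, C i k * ξ1 i * ξ1 k) - 2 * ε * (N - 1) / N
      else (1 / N) * (C i j * ξ1 i * ξ1 j) + 2 * ε / N)
    (x : Fin N → ℝ)
    (hx : ∀ i, x i =
      if ξ1 i = ξ2 i then ((Finset.univ.filter (fun j => ξ1 j ≠ ξ2 j)).card : ℝ)
      else -((Finset.univ.filter (fun j => ξ1 j = ξ2 j)).card : ℝ)) :
    J.mulVec x = (-2 * ε) • x :=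
  stmt_5_general N ε ξ1 ξ2 hξ1 hξ2 C hC J hJ x hx
end

section
/- With two memories ξ¹, ξ² ∈ {1,-1}^N (ξ¹ ≠ ±ξ²), the Jacobian J_{ξ¹} is negative semidefinite on the hyperplane {x : Σ x_i = 0} when ε > 0; more precisely all eigenvalues are in {0, −2ε, −2(|I₁|/N + ε), −2(|I₂|/N + ε)} with 0 simple (eigenvector (1,...,1)). -/
/-- For ε > 0, J_{ξ¹} is negative semidefinite on the zero-sum hyperplane,
all its eigenvalues lie in {0, −2ε, −2(|I₁|/N + ε), −2(|I₂|/N + ε)}, and 0 is a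
simple eigenvalue with eigenvector (1,...,1). -/
theorem stmt_6 (N : ℕ) (hN : 1 ≤ N) (ε : ℝ) (hε : 0 < ε) (ξ1 ξ2 : Fin N → ℝ)
    (hξ1 : ∀ i, ξ1 i = 1 ∨ ξ1 i = -1) (hξ2 : ∀ i, ξ2 i = 1 ∨ ξ2 i = -1)
    (hne : ξ1 ≠ ξ2) (hne' : ξ1 ≠ -ξ2)
    (C : Matrix (Fin N) (Fin N) ℝ) (hC : ∀ i j, C i j = ξ1 i * ξ1 j + ξ2 i * ξ2 j)
    (J : Matrix (Fin N) (Fin N) ℝ)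
    (hJ : ∀ i j, J i j =
      if i = j then
        -(1 / N) * (∑ k ∈ Finset.univ.erase i, C i k * ξ1 i * ξ1 k) - 2 * ε * (N - 1) / N
      else (1 / N) * (C i j * ξ1 i * ξ1 j) + 2 * ε / N) :
    (∀ x : Fin N → ℝ, (∑ i, x i = 0) → dotProduct x (J.mulVec x) ≤ 0) ∧
    J.mulVec (fun _ => (1 : ℝ)) = (0 : ℝ) • (fun _ => (1 : ℝ)) ∧
    (∀ (μ : ℝ) (x : Fin N → ℝ), x ≠ 0 → J.mulVec x = μ • x →
      μ ∈ ({0, -2 * ε,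
        -2 * (((Finset.univ.filter (fun i => ξ1 i = ξ2 i)).card : ℝ) / N + ε),
        -2 * (((Finset.univ.filter (fun i => ξ1 i ≠ ξ2 i)).card : ℝ) / N + ε)} : Set ℝ)) ∧
    (∀ x : Fin N → ℝ, J.mulVec x = 0 → ∃ c : ℝ, x = fun _ => c) := by
  have hN0 : (0:ℝ) < N := by exact_mod_cast hN
  have hNne : (N:ℝ) ≠ 0 := ne_of_gt hN0
  set η : Fin N → ℝ := fun i => ξ1 i * ξ2 i with hηdef
  have hηpm : ∀ i, η i = 1 ∨ η i = -1 := by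
    intro i
    rcases hξ1 i with h1 | h1 <;> rcases hξ2 i with h2 | h2 <;>
      simp [hηdef, h1, h2]
  have hξsq : ∀ i, ξ1 i * ξ1 i = 1 := by
    intro i; rcases hξ1 i with h | h <;> rw [h] <;> ring
  have hξ2sq : ∀ i, ξ2 i * ξ2 i = 1 := by
    intro i; rcases hξ2 i with h | h <;> rw [h] <;> ring
  set B : Fin N → Fin N → ℝ := fun i j => 1 + 2*ε + η i * η j with hBdef
  have hBnn : ∀ i j, 0 ≤ B i j := by
    intro i j
    rcases hηpm i with h1 | h1 <;> rcases hηpm j with h2 | h2 <;>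
      simp [hBdef, h1, h2] <;> linarith
  have hBsymm : ∀ i j, B i j = B j i := by intro i j; simp only [hBdef]; ring
  have hCη : ∀ i j, C i j * ξ1 i * ξ1 j = 1 + η i * η j := by
    intro i j
    rw [hC]
    simp only [hηdef]
    linear_combination (hξsq i) * (ξ1 j * ξ1 j) + hξsq j
  -- entries of N * J
  have hJoff : ∀ i j, i ≠ j → (N:ℝ) * J i j = B i j := by
    intro i j hij
    rw [hJ, if_neg hij, hCη]
    simp only [hBdef]
    field_simp
    ring
  have hJdiag : ∀ i, (N:ℝ) * J i i = -∑ j ∈ Finset.univ.erase i, B i j := by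
    intro i
    rw [hJ, if_pos rfl]
    have h1 : ∑ k ∈ Finset.univ.erase i, C i k * ξ1 i * ξ1 k
        = ∑ k ∈ Finset.univ.erase i, (1 + η i * η k) :=
      Finset.sum_congr rfl fun k _ => hCη i k
    have hcard : (Finset.univ.erase i).card = N - 1 := by
      rw [Finset.card_erase_of_mem (Finset.mem_univ i), Finset.card_univ, Fintype.card_fin]
    have h2 : ∑ j ∈ Finset.univ.erase i, B i j
        = (∑ k ∈ Finset.univ.erase i, (1 + η i * η k)) + ((N:ℝ) - 1) * (2*ε) := by
      simp only [hBdef]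
      rw [Finset.sum_congr rfl fun j _ => show (1 + 2*ε + η i * η j) = ((1 + η i * η j) + 2*ε) by ring]
      rw [Finset.sum_add_distrib, Finset.sum_const, hcard, nsmul_eq_mul]
      rw [Nat.cast_sub hN, Nat.cast_one]
    rw [h1, h2]
    field_simp
    ring
  -- the key formula : N * (J x)_i = ∑_j B i j * (x j - x i)
  have key : ∀ (x : Fin N → ℝ) (i : Fin N),
      (N:ℝ) * (J.mulVec x) i = ∑ j, B i j * (x j - x i) := by
    intro x i
    have hmv : (N:ℝ) * (J.mulVec x) i = ∑ j, ((N:ℝ) * J i j) * x j := by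
      simp only [Matrix.mulVec, dotProduct, Finset.mul_sum]
      exact Finset.sum_congr rfl fun j _ => by ring
    rw [hmv, ← Finset.add_sum_erase _ _ (Finset.mem_univ i),
        ← Finset.add_sum_erase _ (fun j => B i j * (x j - x i)) (Finset.mem_univ i)]
    rw [hJdiag i]
    have h3 : ∑ j ∈ Finset.univ.erase i, ((N:ℝ) * J i j) * x j
        = ∑ j ∈ Finset.univ.erase i, B i j * x j :=
      Finset.sum_congr rfl fun j hj => by
        rw [hJoff i j (Finset.ne_of_mem_erase hj).symm]
    rw [h3]
    have h4 : ∑ j ∈ Finset.univ.erase i, B i j * (x j - x i)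
        = ∑ j ∈ Finset.univ.erase i, B i j * x j
          - (∑ j ∈ Finset.univ.erase i, B i j) * x i := by
      rw [Finset.sum_mul, ← Finset.sum_sub_distrib]
      exact Finset.sum_congr rfl fun j _ => by ring
    rw [h4]
    ring
  -- expansion of the key sum
  have expand : ∀ (x : Fin N → ℝ) (i : Fin N),
      ∑ j, B i j * (x j - x i)
        = (1+2*ε) * (∑ j, x j) + η i * (∑ j, η j * x j)
          - ((1+2*ε)*(N:ℝ) + η i * (∑ j, η j)) * x i := by
    intro x i
    have h : ∀ j, B i j * (x j - x i)
        = (1+2*ε) * x j + η i * (η j * x j) - (1+2*ε) * x i - η i * (η j * x i) := by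
      intro j; simp only [hBdef]; ring
    rw [Finset.sum_congr rfl fun j _ => h j]
    simp only [Finset.sum_sub_distrib, Finset.sum_add_distrib, ← Finset.mul_sum,
      ← Finset.sum_mul, Finset.sum_const, Finset.card_univ, Fintype.card_fin, nsmul_eq_mul]
    ring
  -- Part 1
  have part1 : ∀ x : Fin N → ℝ, dotProduct x (J.mulVec x) ≤ 0 := by
    intro x
    have hdot : (N:ℝ) * dotProduct x (J.mulVec x)
        = ∑ i, ∑ j, B i j * (x i * (x j - x i)) := by
      simp only [dotProduct, Finset.mul_sum]
      refine Finset.sum_congr rfl fun i _ => ?_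
      rw [show (N:ℝ) * (x i * (J.mulVec x) i) = x i * ((N:ℝ) * (J.mulVec x) i) by ring,
        key x i, Finset.mul_sum]
      exact Finset.sum_congr rfl fun j _ => by ring
    have hswap : (∑ i, ∑ j, B i j * (x i * (x j - x i)))
        = ∑ i, ∑ j, B i j * (x j * (x i - x j)) := by
      rw [Finset.sum_comm]
      exact Finset.sum_congr rfl fun j _ => Finset.sum_congr rfl fun i _ => by
        rw [hBsymm i j]
    have h2 : 2 * ((N:ℝ) * dotProduct x (J.mulVec x))
        = ∑ i, ∑ j, -(B i j * (x i - x j)^2) := by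
      have : (∑ i, ∑ j, -(B i j * (x i - x j)^2))
          = (∑ i, ∑ j, B i j * (x i * (x j - x i)))
            + ∑ i, ∑ j, B i j * (x j * (x i - x j)) := by
        rw [← Finset.sum_add_distrib]
        refine Finset.sum_congr rfl fun i _ => ?_
        rw [← Finset.sum_add_distrib]
        exact Finset.sum_congr rfl fun j _ => by ring
      rw [this, ← hswap, ← hdot]; ring
    have hsum : (∑ i, ∑ j, -(B i j * ((x i - x j)^2) : ℝ)) ≤ 0 := by
      refine Finset.sum_nonpos fun i _ => Finset.sum_nonpos fun j _ => ?_
      have := mul_nonneg (hBnn i j) (sq_nonneg (x i - x j))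
      linarith
    nlinarith [h2, hsum]
  -- Part 2
  have part2 : J.mulVec (fun _ => (1:ℝ)) = (0:ℝ) • (fun _ => (1:ℝ)) := by
    funext i
    have h := key (fun _ => (1:ℝ)) i
    simp only [sub_self, mul_zero, Finset.sum_const_zero] at h
    have : (J.mulVec (fun _ => (1:ℝ))) i = 0 := by
      rcases mul_eq_zero.mp h with h' | h'
      · exact absurd h' hNne
      · exact h'
    simp [this]
  -- combinatorial setup
  set S : ℝ := ∑ j, η j with hSdef
  have hmem1 : ∀ i, ξ1 i = ξ2 i ↔ η i = 1 := by
    intro i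
    constructor
    · intro h; simp only [hηdef]; rw [h]; exact hξ2sq i
    · intro h
      rcases hξ1 i with h1 | h1 <;> rcases hξ2 i with h2 | h2 <;>
        simp [hηdef, h1, h2] at h ⊢ <;> linarith
  have hmem2 : ∀ i, ¬(ξ1 i = ξ2 i) ↔ η i = -1 := by
    intro i
    rw [hmem1]
    rcases hηpm i with h | h <;> simp [h] <;> norm_num [h]
  set n1 : ℕ := (Finset.univ.filter (fun i => ξ1 i = ξ2 i)).card with hn1def
  set n2 : ℕ := (Finset.univ.filter (fun i => ξ1 i ≠ ξ2 i)).card with hn2def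
  have hcardN : n1 + n2 = N := by
    rw [hn1def, hn2def]
    rw [Finset.card_filter_add_card_filter_not]
    rw [Finset.card_univ, Fintype.card_fin]
  have hNreal : (N:ℝ) = (n1:ℝ) + n2 := by exact_mod_cast (hcardN.symm)
  have hS : S = (n1:ℝ) - n2 := by
    rw [hSdef, ← Finset.sum_filter_add_sum_filter_not Finset.univ (fun i => ξ1 i = ξ2 i)]
    have e1 : ∑ j ∈ Finset.univ.filter (fun i => ξ1 i = ξ2 i), η j
        = (n1:ℝ) := by
      rw [Finset.sum_congr rfl fun j hj => (hmem1 j).mp (Finset.mem_filter.mp hj).2]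
      rw [Finset.sum_const, nsmul_eq_mul, mul_one, hn1def]
    have e2 : ∑ j ∈ Finset.univ.filter (fun i => ¬ ξ1 i = ξ2 i), η j
        = -(n2:ℝ) := by
      rw [Finset.sum_congr rfl fun j hj => (hmem2 j).mp (Finset.mem_filter.mp hj).2]
      rw [Finset.sum_const, nsmul_eq_mul, hn2def]
      ring
    rw [e1, e2]
    ring
  have hn1pos : 0 < n1 := by
    rw [hn1def, Finset.card_pos]
    obtain ⟨i, hi⟩ := Function.ne_iff.mp hne'
    refine ⟨i, Finset.mem_filter.mpr ⟨Finset.mem_univ i, ?_⟩⟩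
    simp only [Pi.neg_apply] at hi
    rcases hξ1 i with h1 | h1 <;> rcases hξ2 i with h2 | h2 <;>
      rw [h1, h2] <;> rw [h1, h2] at hi <;> norm_num at hi
  have hn2pos : 0 < n2 := by
    rw [hn2def, Finset.card_pos]
    obtain ⟨i, hi⟩ := Function.ne_iff.mp hne
    exact ⟨i, Finset.mem_filter.mpr ⟨Finset.mem_univ i, hi⟩⟩
  have hn1r : (0:ℝ) < n1 := by exact_mod_cast hn1pos
  have hn2r : (0:ℝ) < n2 := by exact_mod_cast hn2pos
  -- the main pointwise eigen-equation
  have hmain : ∀ (μ : ℝ) (x : Fin N → ℝ), J.mulVec x = μ • x → ∀ i,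
      ((1+2*ε)*(N:ℝ) + η i * S + (N:ℝ)*μ) * x i
        = (1+2*ε) * (∑ j, x j) + η i * (∑ j, η j * x j) := by
    intro μ x hx i
    have h1 : (N:ℝ) * (J.mulVec x) i = (N:ℝ) * (μ * x i) := by
      rw [hx]; simp [Pi.smul_apply]
    rw [key x i, expand x i] at h1
    linarith [h1]
  -- rigidity in the generic case
  have caseRigid : ∀ (μ : ℝ) (x : Fin N → ℝ), J.mulVec x = μ • x →
      ((1+2*ε)*(N:ℝ) + S + (N:ℝ)*μ ≠ 0) → ((1+2*ε)*(N:ℝ) - S + (N:ℝ)*μ ≠ 0) →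
      ∃ a b : ℝ, (∀ i, x i = if ξ1 i = ξ2 i then a else b) ∧
        (2*ε*(n2:ℝ) + ((n1:ℝ)+n2)*μ) * a = 2*ε*(n2:ℝ)*b ∧
        (2*ε*(n1:ℝ) + ((n1:ℝ)+n2)*μ) * b = 2*ε*(n1:ℝ)*a := by
    intro μ x hx hα hβ
    obtain ⟨i1, hi1⟩ := Finset.card_pos.mp hn1pos
    obtain ⟨i2, hi2⟩ := Finset.card_pos.mp hn2pos
    have hi1' : ξ1 i1 = ξ2 i1 := (Finset.mem_filter.mp hi1).2
    have hi2' : ¬ ξ1 i2 = ξ2 i2 := (Finset.mem_filter.mp hi2).2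
    have hηi1 : η i1 = 1 := (hmem1 i1).mp hi1'
    have hηi2 : η i2 = -1 := (hmem2 i2).mp hi2'
    have hval : ∀ i, x i = if ξ1 i = ξ2 i then x i1 else x i2 := by
      intro i
      by_cases hi : ξ1 i = ξ2 i
      · rw [if_pos hi]
        have hηi : η i = 1 := (hmem1 i).mp hi
        have e1 := hmain μ x hx i
        have e2 := hmain μ x hx i1
        rw [hηi] at e1
        rw [hηi1] at e2
        have heq : ((1+2*ε)*(N:ℝ) + 1 * S + (N:ℝ)*μ) * x i
            = ((1+2*ε)*(N:ℝ) + 1 * S + (N:ℝ)*μ) * x i1 := by rw [e1, e2]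
        have hc : (1+2*ε)*(N:ℝ) + 1 * S + (N:ℝ)*μ ≠ 0 := by
          intro h; apply hα; linarith
        exact mul_left_cancel₀ hc heq
      · rw [if_neg hi]
        have hηi : η i = -1 := (hmem2 i).mp hi
        have e1 := hmain μ x hx i
        have e2 := hmain μ x hx i2
        rw [hηi] at e1
        rw [hηi2] at e2
        have heq : ((1+2*ε)*(N:ℝ) + (-1) * S + (N:ℝ)*μ) * x i
            = ((1+2*ε)*(N:ℝ) + (-1) * S + (N:ℝ)*μ) * x i2 := by rw [e1, e2]
        have hc : (1+2*ε)*(N:ℝ) + (-1) * S + (N:ℝ)*μ ≠ 0 := by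
          intro h; apply hβ; linarith
        exact mul_left_cancel₀ hc heq
    have hT : (∑ j, x j) = (n1:ℝ) * x i1 + (n2:ℝ) * x i2 := by
      rw [← Finset.sum_filter_add_sum_filter_not Finset.univ (fun i => ξ1 i = ξ2 i)]
      have e1 : ∑ j ∈ Finset.univ.filter (fun i => ξ1 i = ξ2 i), x j = (n1:ℝ) * x i1 := by
        rw [Finset.sum_congr rfl fun j hj => by
          rw [hval j, if_pos (Finset.mem_filter.mp hj).2]]
        rw [Finset.sum_const, nsmul_eq_mul, hn1def]
      have e2 : ∑ j ∈ Finset.univ.filter (fun i => ¬ ξ1 i = ξ2 i), x j = (n2:ℝ) * x i2 := by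
        rw [Finset.sum_congr rfl fun j hj => by
          rw [hval j, if_neg (Finset.mem_filter.mp hj).2]]
        rw [Finset.sum_const, nsmul_eq_mul, hn2def]
      rw [e1, e2]
    have hu : (∑ j, η j * x j) = (n1:ℝ) * x i1 - (n2:ℝ) * x i2 := by
      rw [← Finset.sum_filter_add_sum_filter_not Finset.univ (fun i => ξ1 i = ξ2 i)]
      have e1 : ∑ j ∈ Finset.univ.filter (fun i => ξ1 i = ξ2 i), η j * x j = (n1:ℝ) * x i1 := by
        rw [Finset.sum_congr rfl fun j hj => by
          rw [hval j, if_pos (Finset.mem_filter.mp hj).2,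
            (hmem1 j).mp (Finset.mem_filter.mp hj).2, one_mul]]
        rw [Finset.sum_const, nsmul_eq_mul, hn1def]
      have e2 : ∑ j ∈ Finset.univ.filter (fun i => ¬ ξ1 i = ξ2 i), η j * x j
          = -((n2:ℝ) * x i2) := by
        rw [Finset.sum_congr rfl fun j hj => by
          rw [hval j, if_neg (Finset.mem_filter.mp hj).2,
            (hmem2 j).mp (Finset.mem_filter.mp hj).2]]
        rw [Finset.sum_const, nsmul_eq_mul, hn2def]
        ring
      rw [e1, e2]
      ring
    have hE1 : (2*ε*(n2:ℝ) + ((n1:ℝ)+n2)*μ) * x i1 = 2*ε*(n2:ℝ) * x i2 := by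
      have e := hmain μ x hx i1
      rw [hηi1, hNreal, hS] at e
      linear_combination e + (1+2*ε)*hT + hu
    have hE2 : (2*ε*(n1:ℝ) + ((n1:ℝ)+n2)*μ) * x i2 = 2*ε*(n1:ℝ) * x i1 := by
      have e := hmain μ x hx i2
      rw [hηi2, hNreal, hS] at e
      linear_combination e + (1+2*ε)*hT - hu
    exact ⟨x i1, x i2, hval, hE1, hE2⟩
  -- assemble the four parts
  refine ⟨fun x _ => part1 x, part2, ?_, ?_⟩
  · intro μ x hx0 hx
    simp only [Set.mem_insert_iff, Set.mem_singleton_iff]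
    by_cases hα : (1+2*ε)*(N:ℝ) + S + (N:ℝ)*μ = 0
    · right; right; left
      have hNμ : (N:ℝ)*μ = -(2*(n1:ℝ) + 2*ε*N) := by
        linear_combination hα - hS - hNreal
      field_simp
      linear_combination hNμ
    · by_cases hβ : (1+2*ε)*(N:ℝ) - S + (N:ℝ)*μ = 0
      · right; right; right
        have hNμ : (N:ℝ)*μ = -(2*(n2:ℝ) + 2*ε*N) := by
          linear_combination hβ + hS - hNreal
        field_simp
        linear_combination hNμ
      · obtain ⟨a, b, hval, hE1, hE2⟩ := caseRigid μ x hx hα hβ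
        have hfact : ((2*ε + μ) * ((n1:ℝ)+n2)) * (a - b) = 0 := by
          linear_combination hE1 - hE2
        rcases mul_eq_zero.mp hfact with h | h
        · rcases mul_eq_zero.mp h with h' | h'
          · right; left; linarith
          · exfalso; linarith
        · have hab : a = b := by linarith
          have ha0 : a ≠ 0 := by
            intro h0
            apply hx0
            funext i
            rw [hval i]
            show (if ξ1 i = ξ2 i then a else b) = 0
            split
            · exact h0
            · rw [← hab]; exact h0
          have hμa : (((n1:ℝ)+n2) * μ) * a = 0 := by
            linear_combination hE1 - 2*ε*(n2:ℝ)*hab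
          left
          rcases mul_eq_zero.mp hμa with h' | h'
          · rcases mul_eq_zero.mp h' with h'' | h''
            · exfalso; linarith
            · exact h''
          · exact absurd h' ha0
  · intro x hx
    have hx' : J.mulVec x = (0:ℝ) • x := by rw [zero_smul]; exact hx
    have hα : (1+2*ε)*(N:ℝ) + S + (N:ℝ)*(0:ℝ) ≠ 0 := by
      intro h
      have h' : (N:ℝ) + 2*(ε*N) + n1 - n2 = 0 := by
        linear_combination h - hS
      have := mul_pos hε hN0
      linarith
    have hβ : (1+2*ε)*(N:ℝ) - S + (N:ℝ)*(0:ℝ) ≠ 0 := by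
      intro h
      have h' : (N:ℝ) + 2*(ε*N) - n1 + n2 = 0 := by
        linear_combination h + hS
      have := mul_pos hε hN0
      linarith
    obtain ⟨a, b, hval, hE1, _⟩ := caseRigid 0 x hx' hα hβ
    have hab : a = b := by
      have hc : 2*ε*(n2:ℝ) ≠ 0 := by positivity
      apply mul_left_cancel₀ hc
      linear_combination hE1
    refine ⟨a, funext fun i => ?_⟩
    rw [hval i]
    show (if ξ1 i = ξ2 i then a else b) = a
    split
    · rfl
    · exact hab.symm
end

section
/- For η ∈ {1,-1}^N \ {±ξ¹, ±ξ²}, with I₁ = {i : ξ¹_i = ξ²_i}, I₂ = {i : ξ¹_i ≠ ξ²_i}, the vector x* with x*_i = |I₂| on I₁ and x*_i = −|I₁| on I₂ satisfies J_η x* = −2ε x*; equivalently Σ_j C_{ij} η_i η_j (x*_j − x*_i) = 0 for every i. -/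
/-- For η ∉ {±ξ¹, ±ξ²}, the vector x* (= |I₂| on I₁, −|I₁| on I₂) satisfies
J_η x* = −2ε x*; equivalently Σ_j C_ij η_i η_j (x*_j − x*_i) = 0 for every i. -/
theorem stmt_8 (N : ℕ) (hN : 1 ≤ N) (ε : ℝ) (ξ1 ξ2 η : Fin N → ℝ)
    (hξ1 : ∀ i, ξ1 i = 1 ∨ ξ1 i = -1) (hξ2 : ∀ i, ξ2 i = 1 ∨ ξ2 i = -1)
    (hη : ∀ i, η i = 1 ∨ η i = -1)
    (hne : ξ1 ≠ ξ2) (hne' : ξ1 ≠ -ξ2)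
    (hη1 : η ≠ ξ1) (hη1' : η ≠ -ξ1) (hη2 : η ≠ ξ2) (hη2' : η ≠ -ξ2)
    (C : Matrix (Fin N) (Fin N) ℝ) (hC : ∀ i j, C i j = ξ1 i * ξ1 j + ξ2 i * ξ2 j)
    (J : Matrix (Fin N) (Fin N) ℝ)
    (hJ : ∀ i j, J i j =
      if i = j then
        -(1 / N) * (∑ k ∈ Finset.univ.erase i, C i k * η i * η k) - 2 * ε * (N - 1) / N
      else (1 / N) * (C i j * η i * η j) + 2 * ε / N)
    (x : Fin N → ℝ)
    (hx : ∀ i, x i =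
      if ξ1 i = ξ2 i then ((Finset.univ.filter (fun j => ξ1 j ≠ ξ2 j)).card : ℝ)
      else -((Finset.univ.filter (fun j => ξ1 j = ξ2 j)).card : ℝ)) :
    J.mulVec x = (-2 * ε) • x ∧
    ∀ i, ∑ j, C i j * η i * η j * (x j - x i) = 0 := by
  have hN0 : (N : ℝ) ≠ 0 := Nat.cast_ne_zero.mpr (by omega)
  -- key pointwise vanishing
  have key : ∀ i j, C i j * (x j - x i) = 0 := by
    intro i j
    by_cases hi : ξ1 i = ξ2 i <;> by_cases hj : ξ1 j = ξ2 j
    · rw [hx i, hx j, if_pos hi, if_pos hj]; ring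
    · have h2j : ξ2 j = -ξ1 j := by
        rcases hξ1 j with h1 | h1 <;> rcases hξ2 j with h2 | h2 <;> simp_all
      have : C i j = 0 := by rw [hC, ← hi, h2j]; ring
      rw [this]; ring
    · have h2i : ξ2 i = -ξ1 i := by
        rcases hξ1 i with h1 | h1 <;> rcases hξ2 i with h2 | h2 <;> simp_all
      have : C i j = 0 := by rw [hC, ← hj, h2i]; ring
      rw [this]; ring
    · rw [hx i, hx j, if_neg hi, if_neg hj]; ring
  have claim2 : ∀ i, ∑ j, C i j * η i * η j * (x j - x i) = 0 := by
    intro i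
    apply Finset.sum_eq_zero
    intro j _
    linear_combination (η i * η j) * key i j
  have hsum : ∑ j, x j = 0 := by
    have h : ∑ j, x j = ∑ j, (if ξ1 j = ξ2 j
        then ((Finset.univ.filter (fun j => ξ1 j ≠ ξ2 j)).card : ℝ)
        else -((Finset.univ.filter (fun j => ξ1 j = ξ2 j)).card : ℝ)) :=
      Finset.sum_congr rfl (fun j _ => hx j)
    rw [h, Finset.sum_ite, Finset.sum_const, Finset.sum_const]
    simp only [nsmul_eq_mul]
    have : Finset.univ.filter (fun j => ¬ ξ1 j = ξ2 j)
        = Finset.univ.filter (fun j => ξ1 j ≠ ξ2 j) := rfl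
    rw [this]
    ring
  refine ⟨?_, claim2⟩
  funext i
  simp only [Matrix.mulVec, dotProduct, Pi.smul_apply, smul_eq_mul]
  have hsplit : ∑ j, J i j * x j
      = ∑ j ∈ Finset.univ.erase i, J i j * x j + J i i * x i := by
    rw [Finset.sum_erase_add _ _ (Finset.mem_univ i)]
  rw [hsplit, hJ i i, if_pos rfl]
  have hoff : ∑ j ∈ Finset.univ.erase i, J i j * x j
      = (1 / N) * ∑ j ∈ Finset.univ.erase i, C i j * η i * η j * x j
        + (2 * ε / N) * ∑ j ∈ Finset.univ.erase i, x j := by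
    rw [Finset.mul_sum, Finset.mul_sum, ← Finset.sum_add_distrib]
    refine Finset.sum_congr rfl (fun j hj => ?_)
    rw [hJ i j, if_neg (fun h => (Finset.mem_erase.mp hj).1 h.symm)]
    ring
  have hx_erase : ∑ j ∈ Finset.univ.erase i, x j = -x i := by
    have h := Finset.sum_erase_add Finset.univ x (Finset.mem_univ i)
    rw [hsum] at h
    linarith
  have h2' : ∑ j ∈ Finset.univ.erase i, C i j * η i * η j * (x j - x i) = 0 := by
    rw [Finset.sum_erase _ (by simp)]
    exact claim2 i
  have hexp : ∑ j ∈ Finset.univ.erase i, C i j * η i * η j * x j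
      = (∑ k ∈ Finset.univ.erase i, C i k * η i * η k) * x i := by
    have h : ∑ j ∈ Finset.univ.erase i,
        (C i j * η i * η j * x j - C i j * η i * η j * x i) = 0 := by
      rw [← h2']
      exact Finset.sum_congr rfl (fun j _ => by ring)
    rw [Finset.sum_sub_distrib, ← Finset.sum_mul] at h
    linarith
  rw [hoff, hx_erase, hexp]
  field_simp
  simp only [mul_comm (η i) (C i _)]
  ring
end

section
/- If ξ¹, ξ² ∈ {1,-1}^N with ξ¹ ≠ ±ξ², I₁ = {i : ξ¹_i = ξ²_i}, I₂ = {i : ξ¹_i ≠ ξ²_i}, and 0 < ε < min(|I₁|/N, |I₂|/N), then for every η ∈ {1,-1}^N \ {±ξ¹, ±ξ²}, the Jacobian J_η has a strictly positive eigenvalue (equal to 2(|I₁|/N − ε) or 2(|I₂|/N − ε)); hence every binary pattern other than ±ξ¹, ±ξ² is linearly unstable. -/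
lemma aux_eig (N : ℕ) (hN : 1 ≤ N) (ε : ℝ) (ξ1 ξ2 η : Fin N → ℝ)
    (hξ1 : ∀ i, ξ1 i = 1 ∨ ξ1 i = -1) (hξ2 : ∀ i, ξ2 i = 1 ∨ ξ2 i = -1)
    (hη : ∀ i, η i = 1 ∨ η i = -1)
    (C : Matrix (Fin N) (Fin N) ℝ) (hC : ∀ i j, C i j = ξ1 i * ξ1 j + ξ2 i * ξ2 j)
    (J : Matrix (Fin N) (Fin N) ℝ)
    (hJ : ∀ i j, J i j =
      if i = j then
        -(1 / N) * (∑ k ∈ Finset.univ.erase i, C i k * η i * η k) - 2 * ε * (N - 1) / N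
      else (1 / N) * (C i j * η i * η j) + 2 * ε / N)
    (i0 j0 : Fin N) (hi0 : ξ1 i0 = ξ2 i0 ∧ ξ1 i0 * η i0 = 1)
    (hj0 : ξ1 j0 = ξ2 j0 ∧ ξ1 j0 * η j0 = -1) :
    ∃ x : Fin N → ℝ, x ≠ 0 ∧
      J.mulVec x =
        (2 * (((Finset.univ.filter (fun i => ξ1 i = ξ2 i)).card : ℝ) / N - ε)) • x := by
  classical
  have hN0 : (0:ℝ) < N := by
    have : (1:ℝ) ≤ N := by exact_mod_cast hN
    linarith
  have hNne : (N:ℝ) ≠ 0 := ne_of_gt hN0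
  have hsq : ∀ a : ℝ, (a = 1 ∨ a = -1) → a * a = 1 := by rintro a (rfl|rfl) <;> norm_num
  set u : Fin N → ℝ := fun k => ξ1 k * η k with hu_def
  set v : Fin N → ℝ := fun k => ξ2 k * η k with hv_def
  have hu1 : ∀ k, u k = 1 ∨ u k = -1 := by
    intro k; simp only [hu_def]
    rcases hξ1 k with h|h <;> rcases hη k with h'|h' <;> rw [h, h'] <;> norm_num
  have hv1 : ∀ k, v k = 1 ∨ v k = -1 := by
    intro k; simp only [hv_def]
    rcases hξ2 k with h|h <;> rcases hη k with h'|h' <;> rw [h, h'] <;> norm_num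
  have hvu : ∀ k, ξ1 k = ξ2 k → v k = u k := by
    intro k h; simp only [hu_def, hv_def]; rw [h]
  have hvu' : ∀ k, ξ1 k ≠ ξ2 k → v k = -u k := by
    intro k h
    have h2 : ξ2 k = -ξ1 k := by
      rcases hξ1 k with a|a <;> rcases hξ2 k with b|b
      · exact absurd (a.trans b.symm) h
      · rw [a, b]
      · rw [a, b]; norm_num
      · exact absurd (a.trans b.symm) h
    simp only [hu_def, hv_def]; rw [h2]; ring
  set Sp : Finset (Fin N) := Finset.univ.filter (fun k => ξ1 k = ξ2 k ∧ u k = 1) with hSp_def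
  set Sm : Finset (Fin N) := Finset.univ.filter (fun k => ξ1 k = ξ2 k ∧ u k = -1) with hSm_def
  set p : ℕ := Sp.card with hp_def
  set q : ℕ := Sm.card with hq_def
  have hdisj : Disjoint Sp Sm := by
    rw [Finset.disjoint_left]
    intro m hm hm'
    simp only [hSp_def, hSm_def, Finset.mem_filter] at hm hm'
    have : (1:ℝ) = -1 := hm.2.2.symm.trans hm'.2.2
    norm_num at this
  have hcard : ((Finset.univ.filter (fun k => ξ1 k = ξ2 k)).card : ℝ) = (p:ℝ) + q := by
    have hun : Finset.univ.filter (fun k => ξ1 k = ξ2 k) = Sp ∪ Sm := by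
      ext m
      simp only [hSp_def, hSm_def, Finset.mem_filter, Finset.mem_union, Finset.mem_univ, true_and]
      constructor
      · intro h; rcases hu1 m with h2|h2
        exacts [Or.inl ⟨h, h2⟩, Or.inr ⟨h, h2⟩]
      · rintro (⟨h, _⟩|⟨h, _⟩) <;> exact h
    rw [hun, Finset.card_union_of_disjoint hdisj]
    push_cast; ring
  set x : Fin N → ℝ := fun k =>
    if ξ1 k = ξ2 k ∧ u k = 1 then (q:ℝ) else if ξ1 k = ξ2 k ∧ u k = -1 then -(p:ℝ) else 0
    with hx_def
  have hxSp : ∀ m, ξ1 m = ξ2 m → u m = 1 → x m = (q:ℝ) := by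
    intro m h1 h2; simp only [hx_def]; rw [if_pos ⟨h1, h2⟩]
  have hxSm : ∀ m, ξ1 m = ξ2 m → u m = -1 → x m = -(p:ℝ) := by
    intro m h1 h2; simp only [hx_def]
    rw [if_neg, if_pos ⟨h1, h2⟩]
    rintro ⟨-, h3⟩; rw [h2] at h3; norm_num at h3
  have hxO : ∀ m, ξ1 m ≠ ξ2 m → x m = 0 := by
    intro m h; simp only [hx_def]
    rw [if_neg (fun h' => h h'.1), if_neg (fun h' => h h'.1)]
  have hq0 : (0:ℝ) < q := by
    have : j0 ∈ Sm := by
      simp only [hSm_def, Finset.mem_filter, Finset.mem_univ, true_and]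
      exact hj0
    have := Finset.card_pos.mpr ⟨j0, this⟩
    exact_mod_cast this
  -- generic ite sum
  have hITE : ∀ a b : ℝ,
      (∑ m, (if ξ1 m = ξ2 m ∧ u m = 1 then a else if ξ1 m = ξ2 m ∧ u m = -1 then b else 0))
        = (p:ℝ) * a + (q:ℝ) * b := by
    intro a b
    have hpt : ∀ m : Fin N,
        (if ξ1 m = ξ2 m ∧ u m = 1 then a else if ξ1 m = ξ2 m ∧ u m = -1 then b else 0)
          = (if ξ1 m = ξ2 m ∧ u m = 1 then a else 0)
            + (if ξ1 m = ξ2 m ∧ u m = -1 then b else 0) := by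
      intro m
      by_cases h1 : ξ1 m = ξ2 m ∧ u m = 1
      · rw [if_pos h1, if_pos h1, if_neg, add_zero]
        rintro ⟨-, h3⟩; rw [h1.2] at h3; norm_num at h3
      · rw [if_neg h1, if_neg h1, zero_add]
    rw [Finset.sum_congr rfl fun m _ => hpt m, Finset.sum_add_distrib,
      ← Finset.sum_filter, ← Finset.sum_filter, Finset.sum_const, Finset.sum_const]
    simp only [nsmul_eq_mul]
    rfl
  have hQ : (∑ m, x m) = 0 := by
    simp only [hx_def]; rw [hITE]; ring
  have hP1 : (∑ m, u m * x m) = 2 * (p:ℝ) * q := by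
    have hpt : ∀ m : Fin N, u m * x m =
        (if ξ1 m = ξ2 m ∧ u m = 1 then (q:ℝ) else if ξ1 m = ξ2 m ∧ u m = -1 then (p:ℝ) else 0) := by
      intro m
      by_cases h1 : ξ1 m = ξ2 m ∧ u m = 1
      · rw [if_pos h1, hxSp m h1.1 h1.2, h1.2, one_mul]
      · by_cases h2 : ξ1 m = ξ2 m ∧ u m = -1
        · rw [if_neg h1, if_pos h2, hxSm m h2.1 h2.2, h2.2]; ring
        · rw [if_neg h1, if_neg h2]
          have hx0 : x m = 0 := by
            by_cases hk : ξ1 m = ξ2 m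
            · rcases hu1 m with h|h
              exacts [absurd ⟨hk, h⟩ h1, absurd ⟨hk, h⟩ h2]
            · exact hxO m hk
          rw [hx0, mul_zero]
    rw [Finset.sum_congr rfl fun m _ => hpt m, hITE]; ring
  have hP2 : (∑ m, v m * x m) = 2 * (p:ℝ) * q := by
    have hpt : ∀ m : Fin N, v m * x m = u m * x m := by
      intro m
      by_cases hk : ξ1 m = ξ2 m
      · rw [hvu m hk]
      · rw [hxO m hk, mul_zero, mul_zero]
    rw [Finset.sum_congr rfl fun m _ => hpt m, hP1]
  set A : ℝ := ∑ m, u m with hA_def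
  set B : ℝ := ∑ m, v m with hB_def
  have hAB : A + B = 2 * (p:ℝ) - 2 * q := by
    rw [hA_def, hB_def, ← Finset.sum_add_distrib]
    have hpt : ∀ m : Fin N, u m + v m =
        (if ξ1 m = ξ2 m ∧ u m = 1 then (2:ℝ) else if ξ1 m = ξ2 m ∧ u m = -1 then (-2:ℝ) else 0) := by
      intro m
      by_cases h1 : ξ1 m = ξ2 m ∧ u m = 1
      · rw [if_pos h1, hvu m h1.1, h1.2]; norm_num
      · by_cases h2 : ξ1 m = ξ2 m ∧ u m = -1
        · rw [if_neg h1, if_pos h2, hvu m h2.1, h2.2]; norm_num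
        · rw [if_neg h1, if_neg h2]
          have hk : ξ1 m ≠ ξ2 m := by
            intro hk
            rcases hu1 m with h|h
            exacts [h1 ⟨hk, h⟩, h2 ⟨hk, h⟩]
          rw [hvu' m hk]; ring
    rw [Finset.sum_congr rfl fun m _ => hpt m, hITE]; ring
  -- closed form for J
  have hJ' : ∀ k m, J k m =
      (u k * u m + v k * v m + 2 * ε) / N
        - (if k = m then (u k * A + v k * B) / N + 2 * ε else 0) := by
    intro k m
    rcases eq_or_ne k m with rfl | hkm
    · rw [hJ k k, if_pos rfl, if_pos rfl]
      have hsum : (∑ l ∈ Finset.univ.erase k, C k l * η k * η l)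
          = u k * A + v k * B - 2 := by
        rw [Finset.sum_erase_eq_sub (Finset.mem_univ k)]
        have h1 : (∑ l, C k l * η k * η l) = u k * A + v k * B := by
          rw [hA_def, hB_def, Finset.mul_sum, Finset.mul_sum, ← Finset.sum_add_distrib]
          refine Finset.sum_congr rfl fun l _ => ?_
          rw [hC]; simp only [hu_def, hv_def]; ring
        have h2 : C k k * η k * η k = 2 := by
          rw [hC]
          have e1 := hsq _ (hξ1 k); have e2 := hsq _ (hξ2 k); have e3 := hsq _ (hη k)
          linear_combination (η k * η k) * e1 + (η k * η k) * e2 + 2 * e3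
        rw [h1, h2]
      rw [hsum]
      have e1 := hsq _ (hu1 k); have e2 := hsq _ (hv1 k)
      rw [e1, e2]
      field_simp
      ring
    · rw [hJ k m, if_neg hkm, if_neg hkm]
      rw [hC]; simp only [hu_def, hv_def]; ring
  refine ⟨x, ?_, ?_⟩
  · intro h
    have := congrFun h i0
    rw [hxSp i0 hi0.1 hi0.2] at this
    simp only [Pi.zero_apply] at this
    rw [this] at hq0
    exact lt_irrefl _ hq0
  · funext k
    have hμ : (2 * (((Finset.univ.filter (fun i => ξ1 i = ξ2 i)).card : ℝ) / N - ε))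
        = 2 * (((p:ℝ) + q) / N - ε) := by rw [hcard]
    rw [hμ]
    show (∑ m, J k m * x m) = 2 * (((p:ℝ) + q) / N - ε) * x k
    have step1 : (∑ m, J k m * x m)
        = (∑ m, ((u k * u m + v k * v m + 2 * ε) / N) * x m)
          - ∑ m, (if k = m then (u k * A + v k * B) / N + 2 * ε else 0) * x m := by
      rw [← Finset.sum_sub_distrib]
      refine Finset.sum_congr rfl fun m _ => ?_
      rw [hJ' k m]; ring
    have step2 : (∑ m, (if k = m then (u k * A + v k * B) / N + 2 * ε else 0) * x m)
        = ((u k * A + v k * B) / N + 2 * ε) * x k := by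
      have hpt : ∀ m : Fin N, (if k = m then (u k * A + v k * B) / N + 2 * ε else 0) * x m
          = if k = m then ((u k * A + v k * B) / N + 2 * ε) * x m else 0 := by
        intro m; split <;> simp
      rw [Finset.sum_congr rfl fun m _ => hpt m, Finset.sum_ite_eq]
      simp
    have step3 : (∑ m, ((u k * u m + v k * v m + 2 * ε) / N) * x m)
        = (u k * (2 * (p:ℝ) * q) + v k * (2 * (p:ℝ) * q)) / N := by
      have hpt : ∀ m : Fin N, ((u k * u m + v k * v m + 2 * ε) / N) * x m
          = (u k / N) * (u m * x m) + (v k / N) * (v m * x m) + (2 * ε / N) * x m := by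
        intro m; ring
      rw [Finset.sum_congr rfl fun m _ => hpt m, Finset.sum_add_distrib,
        Finset.sum_add_distrib, ← Finset.mul_sum, ← Finset.mul_sum, ← Finset.mul_sum,
        hP1, hP2, hQ]
      ring
    rw [step1, step2, step3]
    by_cases hk : ξ1 k = ξ2 k
    · rcases hu1 k with hk2 | hk2
      · rw [hxSp k hk hk2, hvu k hk, hk2]
        linear_combination (-(q:ℝ) / N) * hAB
      · rw [hxSm k hk hk2, hvu k hk, hk2]
        linear_combination (-(p:ℝ) / N) * hAB
    · rw [hxO k hk, hvu' k hk]; ring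

/-- If 0 < ε < min(|I₁|/N, |I₂|/N), then every binary pattern η ∉ {±ξ¹, ±ξ²} is
linearly unstable: J_η has a strictly positive eigenvalue, equal to
2(|I₁|/N − ε) or 2(|I₂|/N − ε). -/
theorem stmt_10 (N : ℕ) (hN : 1 ≤ N) (ε : ℝ) (ξ1 ξ2 : Fin N → ℝ)
    (hξ1 : ∀ i, ξ1 i = 1 ∨ ξ1 i = -1) (hξ2 : ∀ i, ξ2 i = 1 ∨ ξ2 i = -1)
    (hne : ξ1 ≠ ξ2) (hne' : ξ1 ≠ -ξ2)
    (hε0 : 0 < ε)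
    (hε : ε < min (((Finset.univ.filter (fun i => ξ1 i = ξ2 i)).card : ℝ) / N)
      (((Finset.univ.filter (fun i => ξ1 i ≠ ξ2 i)).card : ℝ) / N))
    (C : Matrix (Fin N) (Fin N) ℝ) (hC : ∀ i j, C i j = ξ1 i * ξ1 j + ξ2 i * ξ2 j) :
    ∀ η : Fin N → ℝ, (∀ i, η i = 1 ∨ η i = -1) →
      η ≠ ξ1 → η ≠ -ξ1 → η ≠ ξ2 → η ≠ -ξ2 →
      ∀ J : Matrix (Fin N) (Fin N) ℝ,
        (∀ i j, J i j =
          if i = j then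
            -(1 / N) * (∑ k ∈ Finset.univ.erase i, C i k * η i * η k) - 2 * ε * (N - 1) / N
          else (1 / N) * (C i j * η i * η j) + 2 * ε / N) →
        ∃ μ : ℝ, 0 < μ ∧
          (μ = 2 * (((Finset.univ.filter (fun i => ξ1 i = ξ2 i)).card : ℝ) / N - ε) ∨
            μ = 2 * (((Finset.univ.filter (fun i => ξ1 i ≠ ξ2 i)).card : ℝ) / N - ε)) ∧
          ∃ x : Fin N → ℝ, x ≠ 0 ∧ J.mulVec x = μ • x := by
  classical
  intro η hη hη1 hη2 hη3 hη4 J hJ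
  obtain ⟨hc1, hc2⟩ := lt_min_iff.mp hε
  have hsq : ∀ a : ℝ, (a = 1 ∨ a = -1) → a * a = 1 := by rintro a (rfl|rfl) <;> norm_num
  have hdich : ∀ i, ξ1 i = ξ2 i ∨ ξ1 i = -ξ2 i := by
    intro i
    rcases hξ1 i with a|a <;> rcases hξ2 i with b|b <;> rw [a, b] <;> norm_num
  have hval : ∀ (i : Fin N) (c : ℝ), ξ1 i * η i = c → η i = c * ξ1 i := by
    intro i c h
    have e1 := hsq _ (hξ1 i)
    linear_combination ξ1 i * h - η i * e1
  have hu1 : ∀ i, ξ1 i * η i = 1 ∨ ξ1 i * η i = -1 := by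
    intro i
    rcases hξ1 i with a|a <;> rcases hη i with b|b <;> rw [a, b] <;> norm_num
  have hsplit :
      ((∃ i, ξ1 i = ξ2 i ∧ ξ1 i * η i = 1) ∧ (∃ j, ξ1 j = ξ2 j ∧ ξ1 j * η j = -1)) ∨
      ((∃ i, ξ1 i = -ξ2 i ∧ ξ1 i * η i = 1) ∧ (∃ j, ξ1 j = -ξ2 j ∧ ξ1 j * η j = -1)) := by
    by_cases E1p : ∃ i, ξ1 i = ξ2 i ∧ ξ1 i * η i = 1
    · by_cases E1m : ∃ j, ξ1 j = ξ2 j ∧ ξ1 j * η j = -1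
      · exact Or.inl ⟨E1p, E1m⟩
      · right
        by_cases E2p : ∃ i, ξ1 i = -ξ2 i ∧ ξ1 i * η i = 1
        · by_cases E2m : ∃ j, ξ1 j = -ξ2 j ∧ ξ1 j * η j = -1
          · exact ⟨E2p, E2m⟩
          · -- u ≡ 1 everywhere, η = ξ1
            exfalso; apply hη1; funext i
            have h : ξ1 i * η i = 1 := by
              rcases hu1 i with h|h
              · exact h
              · exfalso; rcases hdich i with hd|hd
                exacts [E1m ⟨i, hd, h⟩, E2m ⟨i, hd, h⟩]
            rw [hval i 1 h, one_mul]
        · -- I₁ : u ≡ 1, I₂ : u ≡ -1, η = ξ2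
          exfalso; apply hη3; funext i
          rcases hdich i with hd|hd
          · have h : ξ1 i * η i = 1 := (hu1 i).resolve_right (fun h => E1m ⟨i, hd, h⟩)
            rw [hval i 1 h, one_mul, hd]
          · have h : ξ1 i * η i = -1 := (hu1 i).resolve_left (fun h => E2p ⟨i, hd, h⟩)
            rw [hval i (-1) h, hd]; ring
    · right
      by_cases E2p : ∃ i, ξ1 i = -ξ2 i ∧ ξ1 i * η i = 1
      · by_cases E2m : ∃ j, ξ1 j = -ξ2 j ∧ ξ1 j * η j = -1
        · exact ⟨E2p, E2m⟩
        · -- I₁ : u ≡ -1, I₂ : u ≡ 1, η = -ξ2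
          exfalso; apply hη4; funext i
          simp only [Pi.neg_apply]
          rcases hdich i with hd|hd
          · have h : ξ1 i * η i = -1 := (hu1 i).resolve_left (fun h => E1p ⟨i, hd, h⟩)
            rw [hval i (-1) h, hd]; ring
          · have h : ξ1 i * η i = 1 := (hu1 i).resolve_right (fun h => E2m ⟨i, hd, h⟩)
            rw [hval i 1 h, one_mul, hd]
      · -- u ≡ -1 everywhere, η = -ξ1
        exfalso; apply hη2; funext i
        simp only [Pi.neg_apply]
        have h : ξ1 i * η i = -1 := by
          rcases hu1 i with h|h
          · exfalso; rcases hdich i with hd|hd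
            exacts [E1p ⟨i, hd, h⟩, E2p ⟨i, hd, h⟩]
          · exact h
        rw [hval i (-1) h]; ring
  rcases hsplit with ⟨⟨i0, hi0⟩, j0, hj0⟩ | ⟨⟨i0, hi0⟩, j0, hj0⟩
  · obtain ⟨x, hx0, hxe⟩ := aux_eig N hN ε ξ1 ξ2 η hξ1 hξ2 hη C hC J hJ i0 j0 hi0 hj0
    exact ⟨_, by linarith, Or.inl rfl, x, hx0, hxe⟩
  · have hξ2' : ∀ i, (fun i => -ξ2 i) i = 1 ∨ (fun i => -ξ2 i) i = -1 := by
      intro i; rcases hξ2 i with h|h <;> simp [h]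
    have hC' : ∀ i j, C i j = ξ1 i * ξ1 j + (fun i => -ξ2 i) i * (fun i => -ξ2 i) j := by
      intro i j; rw [hC]; ring
    obtain ⟨x, hx0, hxe⟩ := aux_eig N hN ε ξ1 (fun i => -ξ2 i) η hξ1 hξ2' hη C hC' J hJ i0 j0 hi0 hj0
    have hset : Finset.univ.filter (fun i => ξ1 i = -ξ2 i)
        = Finset.univ.filter (fun i => ξ1 i ≠ ξ2 i) := by
      ext a
      simp only [Finset.mem_filter, Finset.mem_univ, true_and]
      constructor
      · intro h heq
        rw [heq] at h
        rcases hξ2 a with hb|hb <;> rw [hb] at h <;> norm_num at h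
      · intro h; exact (hdich a).resolve_left h
    have hμe : (2 * (((Finset.univ.filter (fun i => ξ1 i = -ξ2 i)).card : ℝ) / N - ε))
        = 2 * (((Finset.univ.filter (fun i => ξ1 i ≠ ξ2 i)).card : ℝ) / N - ε) := by
      rw [hset]
    rw [hμe] at hxe
    exact ⟨_, by linarith, Or.inr rfl, x, hx0, hxe⟩
end

section
/- For the two-memory translated system φ̃'_i = (1/N) Σ_j (C_{ij} ξ^k_i ξ^k_j + 2ε cos(φ̃_j − φ̃_i)) sin(φ̃_j − φ̃_i), if the initial diameter D(φ̃(0)) < π/2, then D(φ̃(t)) < π/2 for all t ≥ 0 and there exists λ > 0 with D(φ̃(t)) ≤ D(φ̃(0)) e^{−λ t} for all t ≥ 0. -/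
/-!
Let `D(t)` be the largest phase difference `φ_i − φ_j`. While `D ≤ π/2` all couplings
`C_ij ξ_i ξ_j + 2ε cos(φ_j − φ_i)` are nonnegative, so for a pair `(i, j)` realising `D`
every term of `φ_i'` is `≤ 0` and every term of `φ_j'` is `≥ 0`; keeping only the two mutual
terms bounds the right Dini derivative by `D' ≤ −(4ε/N) cos D sin D`. Hence `D` cannot grow
while `D ≤ π/2`, a first-exit-time argument keeps `D < π/2` forever, and then
`cos D ≥ cos D(0)` and `sin D ≥ 2D/π` turn the bound into the linear one
`D' ≤ −(8ε/(πN)) cos D(0) · D`, which Grönwall's inequality integrates.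
-/

open Real Set Filter Topology

section UpperEnvelope

theorem ContinuousOn.ciSup_of_fintype {α κ : Type*} [TopologicalSpace α] [Fintype κ] [Nonempty κ]
    {g : κ → α → ℝ} {s : Set α} (hg : ∀ p, ContinuousOn (g p) s) :
    ContinuousOn (fun t => ⨆ p, g p t) s := by
  simp_rw [← Finset.sup'_univ_eq_ciSup]
  exact ContinuousOn.finset_sup'_apply Finset.univ_nonempty fun p _ => hg p

variable {κ : Type*} [Fintype κ] [Nonempty κ] {g : κ → ℝ → ℝ} {g' : κ → ℝ → ℝ}

theorem eventually_slope_ciSup_lt {x r : ℝ} (hg : ∀ p, HasDerivAt (g p) (g' p x) x)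
    (hr : ∀ p, g p x = ⨆ q, g q x → g' p x < r) :
    ∀ᶠ z in 𝓝[>] x, (z - x)⁻¹ * ((⨆ p, g p z) - ⨆ p, g p x) < r := by
  have below : ∀ p, ∀ᶠ z in 𝓝[>] x, g p z < (⨆ q, g q x) + r * (z - x) := by
    intro p
    rcases (Finite.le_ciSup (fun q => g q x) p).eq_or_lt with hp | hp
    · have hslope := (hasDerivAt_iff_tendsto_slope.mp (hg p)).mono_left (nhdsGT_le_nhdsNE x)
      filter_upwards [hslope.eventually_lt_const (hr p hp), self_mem_nhdsWithin] with z hz hzx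
      rw [slope_def_field, div_lt_iff₀ (sub_pos.2 hzx)] at hz
      linarith
    · have hcont : ContinuousAt (fun z => g p z - r * (z - x)) x :=
        (hg p).continuousAt.sub (by fun_prop)
      filter_upwards [nhdsWithin_le_nhds (hcont.eventually_lt_const (by simpa using hp))]
        with z hz
      linarith
  filter_upwards [eventually_all.2 below, self_mem_nhdsWithin] with z hz hzx
  obtain ⟨p, hp⟩ := exists_eq_ciSup_of_finite (f := fun q => g q z)
  rw [inv_mul_lt_iff₀ (sub_pos.2 hzx), ← hp]
  linarith [hz p]

theorem ciSup_le_mul_exp_of_active_deriv_le {a b K : ℝ}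
    (hg : ∀ p, ∀ x ∈ Icc a b, HasDerivAt (g p) (g' p x) x)
    (hK : ∀ x ∈ Ico a b, ∀ p, g p x = ⨆ q, g q x → g' p x ≤ K * ⨆ q, g q x) :
    ∀ t ∈ Icc a b, (⨆ p, g p t) ≤ (⨆ p, g p a) * exp (K * (t - a)) := by
  intro t ht
  have := le_gronwallBound_of_liminf_deriv_right_le (f := fun t => ⨆ p, g p t)
    (f' := fun x => K * ⨆ q, g q x) (ε := 0)
    (ContinuousOn.ciSup_of_fintype fun p x hx => (hg p x hx).continuousAt.continuousWithinAt)
    (fun x hx r hr => (eventually_slope_ciSup_lt (fun p => hg p x (Ico_subset_Icc_self hx))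
      fun p hp => (hK x hx p hp).trans_lt hr).frequently)
    le_rfl (fun x _ => (add_zero _).ge) t ht
  rwa [gronwallBound_ε0] at this

end UpperEnvelope

theorem forall_lt_of_continuousOn_Ici {f : ℝ → ℝ} {a c : ℝ} (hf : ContinuousOn f (Ici a))
    (h : ∀ T ∈ Ici a, (∀ s ∈ Ico a T, f s < c) → f T < c) : ∀ t ∈ Ici a, f t < c := by
  by_contra! ⟨t₀, ht₀, hct₀⟩
  set S := Ici a ∩ f ⁻¹' Ici c
  have hS : IsClosed S := hf.preimage_isClosed_of_isClosed isClosed_Ici isClosed_Ici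
  have hbdd : BddBelow S := ⟨a, fun _ hs => hs.1⟩
  have hmem : sInf S ∈ S := hS.csInf_mem ⟨t₀, ht₀, hct₀⟩ hbdd
  refine (h _ hmem.1 fun s hs => ?_).not_ge hmem.2
  by_contra! hcs
  exact (csInf_le hbdd ⟨hs.1, hcs⟩).not_gt hs.2

theorem two_div_pi_mul_cos_mul_le_cos_mul_sin {x y : ℝ} (hx : 0 ≤ x) (hxy : x ≤ y)
    (hy : y ≤ π / 2) : 2 / π * cos y * x ≤ cos x * sin x := by
  have hcos : cos y ≤ cos x := cos_le_cos_of_nonneg_of_le_pi hx (by linarith [pi_pos]) hxy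
  have hcosy : 0 ≤ cos y := cos_nonneg_of_mem_Icc ⟨by linarith [pi_pos], hy⟩
  calc 2 / π * cos y * x = cos y * (2 / π * x) := by ring
    _ ≤ cos x * sin x :=
      mul_le_mul hcos (mul_le_sin hx (hxy.trans hy)) (by positivity) (hcosy.trans hcos)

theorem ciSup_lt_pi_div_two_and_exp_decay {κ : Type*} [Fintype κ] [Nonempty κ]
    {g : κ → ℝ → ℝ} {g' : κ → ℝ → ℝ} (hg : ∀ p, ∀ t ∈ Ici (0 : ℝ), HasDerivAt (g p) (g' p t) t)
    {c : ℝ} (hc : 0 < c) (hnonneg : ∀ t, 0 ≤ ⨆ p, g p t)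
    (hactive : ∀ t ∈ Ici (0 : ℝ), (⨆ q, g q t) ≤ π / 2 → ∀ p, g p t = ⨆ q, g q t →
      g' p t ≤ -(c * cos (⨆ q, g q t) * sin (⨆ q, g q t)))
    (h0 : (⨆ p, g p 0) < π / 2) :
    (∀ t ∈ Ici (0 : ℝ), (⨆ p, g p t) < π / 2) ∧
      ∃ lam : ℝ, 0 < lam ∧ ∀ t ∈ Ici (0 : ℝ), (⨆ p, g p t) ≤ (⨆ p, g p 0) * exp (-lam * t) := by
  set D : ℝ → ℝ := fun t => ⨆ p, g p t
  have hg' (T : ℝ) : ∀ p, ∀ x ∈ Icc 0 T, HasDerivAt (g p) (g' p x) x :=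
    fun p x hx => hg p x hx.1
  have hmono (T : ℝ) (hT : 0 ≤ T) (hbelow : ∀ s ∈ Ico 0 T, D s ≤ π / 2) : D T ≤ D 0 := by
    have hdecr : ∀ x ∈ Ico 0 T, ∀ p, g p x = D x → g' p x ≤ 0 * D x := fun x hx p hp => by
      have hcos := cos_nonneg_of_mem_Icc ⟨by linarith [hnonneg x, pi_pos], hbelow x hx⟩
      have hsin := sin_nonneg_of_nonneg_of_le_pi (hnonneg x) (by linarith [hbelow x hx, pi_pos])
      have hact := hactive x hx.1 (hbelow x hx) p hp
      rw [zero_mul]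
      nlinarith [mul_nonneg (mul_nonneg hc.le hcos) hsin]
    simpa using ciSup_le_mul_exp_of_active_deriv_le (hg' T) hdecr T ⟨hT, le_rfl⟩
  have hinv : ∀ t ∈ Ici (0 : ℝ), D t < π / 2 :=
    forall_lt_of_continuousOn_Ici
      (ContinuousOn.ciSup_of_fintype fun p x hx => (hg p x hx).continuousAt.continuousWithinAt)
      fun T hT hbelow => (hmono T hT fun s hs => (hbelow s hs).le).trans_lt h0
  have hbound (t : ℝ) (ht : 0 ≤ t) : D t ≤ D 0 := hmono t ht fun s hs => (hinv s hs.1).le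
  set lam := c * (2 / π * cos (D 0))
  have hdecay : ∀ x ∈ Ici (0 : ℝ), ∀ p, g p x = D x → g' p x ≤ -lam * D x := fun x hx p hp => by
    have hlin := two_div_pi_mul_cos_mul_le_cos_mul_sin (hnonneg x) (hbound x hx) h0.le
    have hact := hactive x hx (hinv x hx).le p hp
    nlinarith
  refine ⟨hinv, lam, ?_, fun t ht => ?_⟩
  · exact mul_pos hc (mul_pos (by positivity) (cos_pos_of_mem_Ioo ⟨by linarith [hnonneg 0], h0⟩))
  · simpa using ciSup_le_mul_exp_of_active_deriv_le (hg' t)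
      (fun x hx => hdecay x hx.1) t ⟨ht, le_rfl⟩

section Kuramoto

variable {ι : Type*} [Fintype ι] {x : ι → ℝ} {i j : ι}

theorem sum_mul_sin_sub_sub_sum_mul_sin_sub_le {K : ι → ι → ℝ} (hK : ∀ l m, 0 ≤ K l m)
    (hi : ∀ l, x l ≤ x i) (hj : ∀ l, x j ≤ x l) (hπ : x i - x j ≤ π) :
    ∑ l, K i l * sin (x l - x i) - ∑ l, K j l * sin (x l - x j) ≤
      -((K i j + K j i) * sin (x i - x j)) := by
  have hflip : ∑ l, K i l * sin (x l - x i) = -∑ l, K i l * sin (x i - x l) := by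
    rw [← Finset.sum_neg_distrib]
    congr with l
    rw [← neg_sub, sin_neg, mul_neg]
  have hmax : K i j * sin (x i - x j) ≤ ∑ l, K i l * sin (x i - x l) :=
    Finset.single_le_sum (f := fun l => K i l * sin (x i - x l)) (fun l _ => mul_nonneg (hK i l)
      (sin_nonneg_of_nonneg_of_le_pi (by linarith [hi l]) (by linarith [hj l])))
      (Finset.mem_univ j)
  have hmin : K j i * sin (x i - x j) ≤ ∑ l, K j l * sin (x l - x j) :=
    Finset.single_le_sum (f := fun l => K j l * sin (x l - x j)) (fun l _ => mul_nonneg (hK j l)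
      (sin_nonneg_of_nonneg_of_le_pi (by linarith [hj l]) (by linarith [hi l])))
      (Finset.mem_univ i)
  linarith

theorem sum_coupling_mul_sin_sub_sub_le {A : ι → ι → ℝ} (hA : ∀ l m, 0 ≤ A l m) {ε : ℝ}
    (hε : 0 ≤ ε) (hi : ∀ l, x l ≤ x i) (hj : ∀ l, x j ≤ x l) (hπ : x i - x j ≤ π / 2) :
    ∑ l, (A i l + 2 * ε * cos (x l - x i)) * sin (x l - x i) -
        ∑ l, (A j l + 2 * ε * cos (x l - x j)) * sin (x l - x j) ≤
      -(4 * ε * cos (x i - x j) * sin (x i - x j)) := by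
  have hK : ∀ l m, 0 ≤ A l m + 2 * ε * cos (x m - x l) := fun l m =>
    add_nonneg (hA l m) (mul_nonneg (by positivity) (cos_nonneg_of_mem_Icc
      ⟨by linarith [hi l, hj m], by linarith [hi m, hj l]⟩))
  have hsum := sum_mul_sin_sub_sub_sum_mul_sin_sub_le hK hi hj (by linarith [pi_pos])
  have hsin : 0 ≤ sin (x i - x j) :=
    sin_nonneg_of_nonneg_of_le_pi (by linarith [hi j]) (by linarith [pi_pos])
  rw [← neg_sub (x i), cos_neg] at hsum
  nlinarith [mul_nonneg (hA i j) hsin, mul_nonneg (hA j i) hsin]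

end Kuramoto

theorem hebbian_mul_mul_nonneg {a b c d : ℝ} (ha : a = 1 ∨ a = -1) (hb : b = 1 ∨ b = -1)
    (hc : c = 1 ∨ c = -1) (hd : d = 1 ∨ d = -1) : 0 ≤ (a * b + c * d) * a * b := by
  rcases ha with rfl | rfl <;> rcases hb with rfl | rfl <;> rcases hc with rfl | rfl <;>
    rcases hd with rfl | rfl <;> norm_num

section Spread

variable {ι : Type*} [Finite ι] {x : ι → ℝ}

theorem ciSup_sub_nonneg [Nonempty ι] : 0 ≤ ⨆ p : ι × ι, (x p.1 - x p.2) := by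
  obtain ⟨i⟩ := ‹Nonempty ι›
  simpa using Finite.le_ciSup (fun p : ι × ι => x p.1 - x p.2) (i, i)

theorem le_and_ge_of_sub_eq_ciSup_sub {i j : ι} (h : x i - x j = ⨆ p : ι × ι, (x p.1 - x p.2)) :
    (∀ l, x l ≤ x i) ∧ ∀ l, x j ≤ x l :=
  ⟨fun l => by linarith [Finite.le_ciSup (fun p : ι × ι => x p.1 - x p.2) (l, j)],
    fun l => by linarith [Finite.le_ciSup (fun p : ι × ι => x p.1 - x p.2) (i, l)]⟩

end Spread

/-- For the translated two-memory system, if D(φ(0)) < π/2 then D(φ(t)) < π/2 for all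
t ≥ 0 and the diameter decays exponentially. -/
theorem stmt_15 (N : ℕ) (hN : 1 ≤ N) (ε : ℝ) (hε : 0 < ε) (ξ1 ξ2 ξk : Fin N → ℝ)
    (hξ1 : ∀ i, ξ1 i = 1 ∨ ξ1 i = -1) (hξ2 : ∀ i, ξ2 i = 1 ∨ ξ2 i = -1)
    (hk : ξk = ξ1 ∨ ξk = ξ2)
    (C : Matrix (Fin N) (Fin N) ℝ) (hC : ∀ i j, C i j = ξ1 i * ξ1 j + ξ2 i * ξ2 j)
    (φ : ℝ → Fin N → ℝ)
    (hode : ∀ t ∈ Set.Ici (0 : ℝ), ∀ i,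
      HasDerivAt (fun s => φ s i)
        ((1 / N) * ∑ j, (C i j * ξk i * ξk j + 2 * ε * Real.cos (φ t j - φ t i)) *
          Real.sin (φ t j - φ t i)) t)
    (h0 : (⨆ i, ⨆ j, (φ 0 i - φ 0 j)) < Real.pi / 2) :
    (∀ t ∈ Set.Ici (0 : ℝ), (⨆ i, ⨆ j, (φ t i - φ t j)) < Real.pi / 2) ∧
    ∃ lam : ℝ, 0 < lam ∧ ∀ t ∈ Set.Ici (0 : ℝ),
      (⨆ i, ⨆ j, (φ t i - φ t j)) ≤
        (⨆ i, ⨆ j, (φ 0 i - φ 0 j)) * Real.exp (-lam * t) := by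
  have : Nonempty (Fin N) := ⟨⟨0, hN⟩⟩
  have hcoupling (i j : Fin N) : 0 ≤ C i j * ξk i * ξk j := by
    rcases hk with rfl | rfl
    · simpa [hC, mul_assoc] using
        hebbian_mul_mul_nonneg (hξ1 i) (hξ1 j) (hξ2 i) (hξ2 j)
    · simpa [hC, mul_assoc, add_comm] using
        hebbian_mul_mul_nonneg (hξ2 i) (hξ2 j) (hξ1 i) (hξ1 j)
  have hpairs (t : ℝ) : (⨆ i, ⨆ j, (φ t i - φ t j)) = ⨆ p : Fin N × Fin N, (φ t p.1 - φ t p.2) :=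
    (Finite.ciSup_prod fun p : Fin N × Fin N => φ t p.1 - φ t p.2).symm
  simp only [hpairs] at h0 ⊢
  refine ciSup_lt_pi_div_two_and_exp_decay (g := fun (p : Fin N × Fin N) t => φ t p.1 - φ t p.2)
    (fun p t ht => (hode t ht p.1).sub (hode t ht p.2)) (c := 4 * ε / N) (by positivity)
    (fun t => ciSup_sub_nonneg) ?_ h0
  rintro t - hπ ⟨i, j⟩ (hij : φ t i - φ t j = _)
  obtain ⟨hi, hj⟩ := le_and_ge_of_sub_eq_ciSup_sub hij
  have hfield := sum_coupling_mul_sin_sub_sub_le hcoupling hε.le hi hj (hij ▸ hπ)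
  rw [← hij, ← mul_sub]
  refine (mul_le_mul_of_nonneg_left hfield (by positivity)).trans_eq ?_
  ring
end

section
/- For three memories with J₁ = {j : ξ²_j = ξ³_j}, J₂ = {j : ξ²_j ≠ ξ³_j} both nonempty and J₁₁ = {j ∈ J₁ : ξ¹_j = ξ²_j} ≠ ∅, J₁₂ = {j ∈ J₁ : ξ¹_j = −ξ²_j} ≠ ∅, the vector x* with x*_i = |J₁₂| on J₁₁, x*_i = −|J₁₁| on J₁₂, 0 elsewhere, is an eigenvector of the Jacobian I_{ξ¹} with eigenvalue (|J₁| − |J₂|)/N − 2ε. -/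
/-!
The diagonal of `I` is minus the sum of the other entries of its row, so
`(I x)ᵢ = ∑ⱼ Mᵢⱼ (xⱼ - xᵢ)` where `N Mᵢⱼ = 1 + 2ε + uᵢuⱼ + vᵢvⱼ`, with `u = ξ¹ξ²`, `v = ξ¹ξ³`.
Let `p`, `q` be the indicators of `J₁₁`, `J₁₂` and `a = |J₁₁|`, `b = |J₁₂|`, so `x = b p - a q`.
On `J₁₁` we have `u = v = 1`, on `J₁₂` `u = v = -1`, and on `J₂` `u + v = 0`; hence
`u x = v x = b p + a q` and `u + v = 2 (p - q)`. This gives `∑ x = 0`, `∑ u x = ∑ v x = 2ab`,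
`∑ (u + v) = 2 (a - b)`, and then `N (I x)ᵢ = (2 (a + b) - (1 + 2ε) N) xᵢ`; finally
`|J₁| = a + b` and `|J₁| + |J₂| = N`.
-/

open Finset Matrix

theorem Matrix.mulVec_apply_eq_sum_mul_sub {ι R : Type*} [Fintype ι] [DecidableEq ι] [CommRing R]
    {M I : Matrix ι ι R} (hI : ∀ i j, I i j = if i = j then -∑ k ∈ univ.erase i, M i k else M i j)
    (x : ι → R) (i : ι) : (I *ᵥ x) i = ∑ j, M i j * (x j - x i) := by
  have hoff : ∀ j ∈ univ.erase i, I i j * x j = M i j * x j := fun j hj => by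
    rw [hI, if_neg (ne_of_mem_erase hj).symm]
  rw [mulVec, dotProduct, ← add_sum_erase _ _ (mem_univ i), ← add_sum_erase _ _ (mem_univ i),
    sum_congr rfl hoff, hI, if_pos rfl, sub_self, mul_zero, zero_add]
  simp only [mul_sub, sum_sub_distrib, ← sum_mul]
  ring

theorem jacobian_mulVec_apply {ι : Type*} [Fintype ι] [DecidableEq ι] {N : ℕ}
    (hN : Fintype.card ι = N) {ε : ℝ} {ξ1 ξ2 ξ3 : ι → ℝ} (hξ1 : ∀ i, ξ1 i = 1 ∨ ξ1 i = -1)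
    {S I : Matrix ι ι ℝ} (hS : ∀ i j, S i j = ξ1 i * ξ1 j + ξ2 i * ξ2 j + ξ3 i * ξ3 j)
    (hI : ∀ i j, I i j =
      if i = j then
        -(1 / N) * (∑ k ∈ univ.erase i, S i k * ξ1 i * ξ1 k) - 2 * ε * (N - 1) / N
      else (1 / N) * (S i j * ξ1 i * ξ1 j) + 2 * ε / N)
    (x : ι → ℝ) (i : ι) :
    (I *ᵥ x) i = ((1 + 2 * ε) * (∑ j, x j - N * x i)
      + ξ1 i * ξ2 i * ∑ j, ξ1 j * ξ2 j * x j + ξ1 i * ξ3 i * ∑ j, ξ1 j * ξ3 j * x j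
      - ξ1 i * ξ2 i * x i * ∑ j, ξ1 j * ξ2 j - ξ1 i * ξ3 i * x i * ∑ j, ξ1 j * ξ3 j) / N := by
  set M : Matrix ι ι ℝ := fun i j => (1 / N) * (S i j * ξ1 i * ξ1 j) + 2 * ε / N
  have hcard (i : ι) : (#(univ.erase i) : ℝ) = N - 1 := by
    rw [card_erase_of_mem (mem_univ i), card_univ, hN,
      Nat.cast_sub (hN ▸ Fintype.card_pos_iff.mpr ⟨i⟩), Nat.cast_one]
  have hIM (i j : ι) : I i j = if i = j then -∑ k ∈ univ.erase i, M i k else M i j := by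
    rw [hI, sum_add_distrib, ← mul_sum, sum_const, nsmul_eq_mul, hcard]
    split_ifs <;> ring
  have hsq (i : ι) : ξ1 i * ξ1 i = 1 := by rcases hξ1 i with h | h <;> simp [h]
  have hM (j : ι) : M i j * (x j - x i) = ((1 + 2 * ε) * (x j - x i)
      + ξ1 i * ξ2 i * (ξ1 j * ξ2 j * x j) + ξ1 i * ξ3 i * (ξ1 j * ξ3 j * x j)
      - ξ1 i * ξ2 i * x i * (ξ1 j * ξ2 j) - ξ1 i * ξ3 i * x i * (ξ1 j * ξ3 j)) / N := by
    simp only [M, hS]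
    linear_combination (x j - x i) / N * ((ξ1 j * ξ1 j) * hsq i + hsq j)
  rw [mulVec_apply_eq_sum_mul_sub hIM, sum_congr rfl fun j _ => hM j, ← sum_div]
  simp only [sum_add_distrib, sum_sub_distrib, ← mul_sum, sum_const, card_univ, hN, nsmul_eq_mul]

section Signs

/-- Evaluated at `(ξ¹ⱼ, ξ²ⱼ, ξ³ⱼ)`, `ind₁₁` and `ind₁₂` are the indicators of `J₁₁` and `J₁₂`. -/
noncomputable def ind₁₁ (s₁ s₂ s₃ : ℝ) : ℝ := if s₂ = s₃ ∧ s₁ = s₂ then 1 else 0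

noncomputable def ind₁₂ (s₁ s₂ s₃ : ℝ) : ℝ := if s₂ = s₃ ∧ s₁ = -s₂ then 1 else 0

variable {s₁ s₂ s₃ : ℝ}

theorem ite_eq_mul_ind₁₁_sub_mul_ind₁₂ (a b : ℝ) (h₂ : s₂ = 1 ∨ s₂ = -1) :
    (if s₂ = s₃ ∧ s₁ = s₂ then b else if s₂ = s₃ ∧ s₁ = -s₂ then -a else 0)
      = b * ind₁₁ s₁ s₂ s₃ - a * ind₁₂ s₁ s₂ s₃ := by
  unfold ind₁₁ ind₁₂
  by_cases h : s₂ = s₃ ∧ s₁ = s₂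
  · have h' : ¬(s₂ = s₃ ∧ s₁ = -s₂) := fun h' => by rcases h₂ with h₂ | h₂ <;> linarith [h.2, h'.2]
    rw [if_pos h, if_pos h, if_neg h']
    ring
  · simp only [h, if_false]
    split_ifs <;> ring

theorem ite_eq_eq_ind₁₁_add_ind₁₂ (h₁ : s₁ = 1 ∨ s₁ = -1) (h₂ : s₂ = 1 ∨ s₂ = -1) :
    (if s₂ = s₃ then 1 else 0 : ℝ) = ind₁₁ s₁ s₂ s₃ + ind₁₂ s₁ s₂ s₃ := by
  unfold ind₁₁ ind₁₂
  rcases h₁ with rfl | rfl <;> rcases h₂ with rfl | rfl <;> split_ifs <;> grind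

theorem mul_add_mul_eq_ind₁₁_sub_ind₁₂ (h₁ : s₁ = 1 ∨ s₁ = -1) (h₂ : s₂ = 1 ∨ s₂ = -1)
    (h₃ : s₃ = 1 ∨ s₃ = -1) :
    s₁ * s₂ + s₁ * s₃ = 2 * ind₁₁ s₁ s₂ s₃ - 2 * ind₁₂ s₁ s₂ s₃ := by
  unfold ind₁₁ ind₁₂
  rcases h₁ with rfl | rfl <;> rcases h₂ with rfl | rfl <;> rcases h₃ with rfl | rfl <;> norm_num

theorem mul₁₂_mul_ind_sub (a b : ℝ) (h₁ : s₁ = 1 ∨ s₁ = -1) (h₂ : s₂ = 1 ∨ s₂ = -1) :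
    s₁ * s₂ * (b * ind₁₁ s₁ s₂ s₃ - a * ind₁₂ s₁ s₂ s₃)
      = b * ind₁₁ s₁ s₂ s₃ + a * ind₁₂ s₁ s₂ s₃ := by
  unfold ind₁₁ ind₁₂
  rcases h₁ with rfl | rfl <;> rcases h₂ with rfl | rfl <;> split_ifs <;> grind

theorem mul₁₃_mul_ind_sub (a b : ℝ) (h₁ : s₁ = 1 ∨ s₁ = -1) (h₂ : s₂ = 1 ∨ s₂ = -1) :
    s₁ * s₃ * (b * ind₁₁ s₁ s₂ s₃ - a * ind₁₂ s₁ s₂ s₃)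
      = b * ind₁₁ s₁ s₂ s₃ + a * ind₁₂ s₁ s₂ s₃ := by
  unfold ind₁₁ ind₁₂
  rcases h₁ with rfl | rfl <;> rcases h₂ with rfl | rfl <;> split_ifs <;> grind

end Signs

section SignVectors

variable {ι : Type*} [Fintype ι] {ξ1 ξ2 ξ3 : ι → ℝ}

theorem sum_mul_add_sum_mul_eq (hξ1 : ∀ i, ξ1 i = 1 ∨ ξ1 i = -1)
    (hξ2 : ∀ i, ξ2 i = 1 ∨ ξ2 i = -1) (hξ3 : ∀ i, ξ3 i = 1 ∨ ξ3 i = -1) :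
    ∑ j, ξ1 j * ξ2 j + ∑ j, ξ1 j * ξ3 j
      = 2 * ∑ j, ind₁₁ (ξ1 j) (ξ2 j) (ξ3 j) - 2 * ∑ j, ind₁₂ (ξ1 j) (ξ2 j) (ξ3 j) := by
  rw [← sum_add_distrib, sum_congr rfl fun j _ =>
    mul_add_mul_eq_ind₁₁_sub_ind₁₂ (hξ1 j) (hξ2 j) (hξ3 j), sum_sub_distrib, mul_sum, mul_sum]

theorem card_filter_eq_sub_card_filter_ne (hξ1 : ∀ i, ξ1 i = 1 ∨ ξ1 i = -1)
    (hξ2 : ∀ i, ξ2 i = 1 ∨ ξ2 i = -1) :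
    (#{j | ξ2 j = ξ3 j} : ℝ) - #{j | ξ2 j ≠ ξ3 j}
      = 2 * (∑ j, ind₁₁ (ξ1 j) (ξ2 j) (ξ3 j) + ∑ j, ind₁₂ (ξ1 j) (ξ2 j) (ξ3 j))
        - Fintype.card ι := by
  have hJ : (#{j | ξ2 j = ξ3 j} : ℝ) + #{j | ξ2 j ≠ ξ3 j} = Fintype.card ι := by
    exact_mod_cast card_filter_add_card_filter_not _
  have hJ₁ : (#{j | ξ2 j = ξ3 j} : ℝ)
      = ∑ j, ind₁₁ (ξ1 j) (ξ2 j) (ξ3 j) + ∑ j, ind₁₂ (ξ1 j) (ξ2 j) (ξ3 j) := by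
    rw [← sum_add_distrib, ← sum_boole]
    exact sum_congr rfl fun j _ => ite_eq_eq_ind₁₁_add_ind₁₂ (hξ1 j) (hξ2 j)
  linarith

end SignVectors

theorem stmt_17_general (N : ℕ) (ε : ℝ) (ξ1 ξ2 ξ3 : Fin N → ℝ)
    (hξ1 : ∀ i, ξ1 i = 1 ∨ ξ1 i = -1) (hξ2 : ∀ i, ξ2 i = 1 ∨ ξ2 i = -1)
    (hξ3 : ∀ i, ξ3 i = 1 ∨ ξ3 i = -1)
    (S : Matrix (Fin N) (Fin N) ℝ)
    (hS : ∀ i j, S i j = ξ1 i * ξ1 j + ξ2 i * ξ2 j + ξ3 i * ξ3 j)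
    (I : Matrix (Fin N) (Fin N) ℝ)
    (hI : ∀ i j, I i j =
      if i = j then
        -(1 / N) * (∑ k ∈ Finset.univ.erase i, S i k * ξ1 i * ξ1 k) - 2 * ε * (N - 1) / N
      else (1 / N) * (S i j * ξ1 i * ξ1 j) + 2 * ε / N)
    (x : Fin N → ℝ)
    (hx : ∀ i, x i =
      if ξ2 i = ξ3 i ∧ ξ1 i = ξ2 i then
        ((Finset.univ.filter (fun j => ξ2 j = ξ3 j ∧ ξ1 j = -ξ2 j)).card : ℝ)
      else if ξ2 i = ξ3 i ∧ ξ1 i = -ξ2 i then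
        -((Finset.univ.filter (fun j => ξ2 j = ξ3 j ∧ ξ1 j = ξ2 j)).card : ℝ)
      else 0) :
    I.mulVec x =
      ((((Finset.univ.filter (fun j => ξ2 j = ξ3 j)).card : ℝ) -
        ((Finset.univ.filter (fun j => ξ2 j ≠ ξ3 j)).card : ℝ)) / N - 2 * ε) • x := by
  set a : ℝ := ((#{j | ξ2 j = ξ3 j ∧ ξ1 j = ξ2 j} : ℕ) : ℝ)
  set b : ℝ := ((#{j | ξ2 j = ξ3 j ∧ ξ1 j = -ξ2 j} : ℕ) : ℝ)
  have hx' (j : Fin N) : x j = b * ind₁₁ (ξ1 j) (ξ2 j) (ξ3 j) - a * ind₁₂ (ξ1 j) (ξ2 j) (ξ3 j) :=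
    (hx j).trans (ite_eq_mul_ind₁₁_sub_mul_ind₁₂ a b (hξ2 j))
  have ha : ∑ j, ind₁₁ (ξ1 j) (ξ2 j) (ξ3 j) = a := sum_boole _ _
  have hb : ∑ j, ind₁₂ (ξ1 j) (ξ2 j) (ξ3 j) = b := sum_boole _ _
  have huv := sum_mul_add_sum_mul_eq hξ1 hξ2 hξ3
  rw [ha, hb] at huv
  funext i
  have hN : (N : ℝ) ≠ 0 := Nat.cast_ne_zero.2 (Fin.pos i).ne'
  rw [jacobian_mulVec_apply (Fintype.card_fin N) hξ1 hS hI, Pi.smul_apply, smul_eq_mul,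
    card_filter_eq_sub_card_filter_ne hξ1 hξ2, Fintype.card_fin]
  simp only [hx', fun j => mul₁₂_mul_ind_sub a b (hξ1 j) (hξ2 j),
    fun j => mul₁₃_mul_ind_sub a b (hξ1 j) (hξ2 j), sum_add_distrib, sum_sub_distrib, ← mul_sum,
    ha, hb]
  field_simp
  linear_combination 2 * a * b * mul_add_mul_eq_ind₁₁_sub_ind₁₂ (hξ1 i) (hξ2 i) (hξ3 i)
    - (b * ind₁₁ (ξ1 i) (ξ2 i) (ξ3 i) + a * ind₁₂ (ξ1 i) (ξ2 i) (ξ3 i)) * huv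

/-- For three memories, the vector x* (= |J₁₂| on J₁₁, −|J₁₁| on J₁₂, 0 elsewhere)
is an eigenvector of the Jacobian I_{ξ¹} with eigenvalue (|J₁| − |J₂|)/N − 2ε. -/
theorem stmt_17 (N : ℕ) (hN : 1 ≤ N) (ε : ℝ) (ξ1 ξ2 ξ3 : Fin N → ℝ)
    (hξ1 : ∀ i, ξ1 i = 1 ∨ ξ1 i = -1) (hξ2 : ∀ i, ξ2 i = 1 ∨ ξ2 i = -1)
    (hξ3 : ∀ i, ξ3 i = 1 ∨ ξ3 i = -1)
    (h12 : ξ1 ≠ ξ2) (h12' : ξ1 ≠ -ξ2) (h13 : ξ1 ≠ ξ3) (h13' : ξ1 ≠ -ξ3)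
    (h23 : ξ2 ≠ ξ3) (h23' : ξ2 ≠ -ξ3)
    (S : Matrix (Fin N) (Fin N) ℝ)
    (hS : ∀ i j, S i j = ξ1 i * ξ1 j + ξ2 i * ξ2 j + ξ3 i * ξ3 j)
    (hJ1ne : (Finset.univ.filter (fun j => ξ2 j = ξ3 j)).Nonempty)
    (hJ2ne : (Finset.univ.filter (fun j => ξ2 j ≠ ξ3 j)).Nonempty)
    (hJ11ne : (Finset.univ.filter (fun j => ξ2 j = ξ3 j ∧ ξ1 j = ξ2 j)).Nonempty)
    (hJ12ne : (Finset.univ.filter (fun j => ξ2 j = ξ3 j ∧ ξ1 j = -ξ2 j)).Nonempty)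
    (I : Matrix (Fin N) (Fin N) ℝ)
    (hI : ∀ i j, I i j =
      if i = j then
        -(1 / N) * (∑ k ∈ Finset.univ.erase i, S i k * ξ1 i * ξ1 k) - 2 * ε * (N - 1) / N
      else (1 / N) * (S i j * ξ1 i * ξ1 j) + 2 * ε / N)
    (x : Fin N → ℝ)
    (hx : ∀ i, x i =
      if ξ2 i = ξ3 i ∧ ξ1 i = ξ2 i then
        ((Finset.univ.filter (fun j => ξ2 j = ξ3 j ∧ ξ1 j = -ξ2 j)).card : ℝ)
      else if ξ2 i = ξ3 i ∧ ξ1 i = -ξ2 i then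
        -((Finset.univ.filter (fun j => ξ2 j = ξ3 j ∧ ξ1 j = ξ2 j)).card : ℝ)
      else 0) :
    I.mulVec x =
      ((((Finset.univ.filter (fun j => ξ2 j = ξ3 j)).card : ℝ) -
        ((Finset.univ.filter (fun j => ξ2 j ≠ ξ3 j)).card : ℝ)) / N - 2 * ε) • x :=
  stmt_17_general N ε ξ1 ξ2 ξ3 hξ1 hξ2 hξ3 S hS I hI x hx
end

section
/- If J₁₁, J₁₂, J₂₁, J₂₂ are all nonempty, then the maximum eigenvalue of the three-memory Jacobian I_{ξ¹} equals max(||J₁| − |J₂||/N − 2ε, 0); consequently, if ε < (1/2)||J₁|/N − 1/2|·2 = ||J₁|/N − 1/2| then I_{ξ¹} has a positive eigenvalue, and if ε > ||J₁|/N − 1/2| then all eigenvalues of I_{ξ¹} other than the simple eigenvalue 0 are negative. -/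
open Finset

set_option maxHeartbeats 2000000 in
lemma key (N : ℕ) (hN : 1 ≤ N) (ε : ℝ) (hε : 0 < ε) (η ζ : Fin N → ℝ)
    (hη : ∀ i, η i = 1 ∨ η i = -1) (hζ : ∀ i, ζ i = 1 ∨ ζ i = -1)
    (hA : (Finset.univ.filter (fun i => η i = 1 ∧ ζ i = 1)).Nonempty)
    (hB : (Finset.univ.filter (fun i => η i = -1 ∧ ζ i = -1)).Nonempty)
    (hC : (Finset.univ.filter (fun i => η i = 1 ∧ ζ i = -1)).Nonempty)
    (hD : (Finset.univ.filter (fun i => η i = -1 ∧ ζ i = 1)).Nonempty)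
    (I : Matrix (Fin N) (Fin N) ℝ)
    (hstar : ∀ (x : Fin N → ℝ) (i : Fin N), (N : ℝ) * I.mulVec x i =
      (1 + 2*ε) * (∑ j, x j) + η i * (∑ j, η j * x j) + ζ i * (∑ j, ζ j * x j)
      - x i * ((N : ℝ)*(1 + 2*ε) + η i * (∑ j, η j) + ζ i * (∑ j, ζ j))) :
    (∃ x : Fin N → ℝ, x ≠ 0 ∧
      I.mulVec x =
        (max (|((Finset.univ.filter (fun j => η j = ζ j)).card : ℝ) -
          ((Finset.univ.filter (fun j => η j ≠ ζ j)).card : ℝ)| / N - 2 * ε) 0) • x) ∧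
    (∀ (μ : ℝ) (x : Fin N → ℝ), x ≠ 0 → I.mulVec x = μ • x →
      μ ≤ max (|((Finset.univ.filter (fun j => η j = ζ j)).card : ℝ) -
        ((Finset.univ.filter (fun j => η j ≠ ζ j)).card : ℝ)| / N - 2 * ε) 0) ∧
    (ε < |((Finset.univ.filter (fun j => η j = ζ j)).card : ℝ) / N - 1 / 2| →
      ∃ μ : ℝ, 0 < μ ∧ ∃ x : Fin N → ℝ, x ≠ 0 ∧ I.mulVec x = μ • x) ∧
    (|((Finset.univ.filter (fun j => η j = ζ j)).card : ℝ) / N - 1 / 2| < ε →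
      (∀ (μ : ℝ) (x : Fin N → ℝ), x ≠ 0 → I.mulVec x = μ • x → μ ≠ 0 → μ < 0) ∧
      (∀ x : Fin N → ℝ, I.mulVec x = 0 → ∃ c : ℝ, x = fun _ => c)) := by
  classical
  have hN0 : (0:ℝ) < (N:ℝ) := by exact_mod_cast Nat.lt_of_lt_of_le Nat.zero_lt_one hN
  have hN0' : (N:ℝ) ≠ 0 := ne_of_gt hN0
  have hne : ∀ r : ℝ, r = 1 ∨ r = -1 → (¬ r = 1 ↔ r = -1) := by
    intro r hr; constructor
    · intro h; rcases hr with h' | h' <;> simp_all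
    · intro h h'; rw [h'] at h; norm_num at h
  set A := Finset.univ.filter (fun i => η i = 1 ∧ ζ i = 1) with hAdef
  set B := Finset.univ.filter (fun i => η i = -1 ∧ ζ i = -1) with hBdef
  set C := Finset.univ.filter (fun i => η i = 1 ∧ ζ i = -1) with hCdef
  set D := Finset.univ.filter (fun i => η i = -1 ∧ ζ i = 1) with hDdef
  have hmemA : ∀ i ∈ A, η i = 1 ∧ ζ i = 1 := fun i hi => (Finset.mem_filter.mp hi).2
  have hmemB : ∀ i ∈ B, η i = -1 ∧ ζ i = -1 := fun i hi => (Finset.mem_filter.mp hi).2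
  have hmemC : ∀ i ∈ C, η i = 1 ∧ ζ i = -1 := fun i hi => (Finset.mem_filter.mp hi).2
  have hmemD : ∀ i ∈ D, η i = -1 ∧ ζ i = 1 := fun i hi => (Finset.mem_filter.mp hi).2
  have hcases : ∀ i, i ∈ A ∨ i ∈ B ∨ i ∈ C ∨ i ∈ D := by
    intro i
    rcases hη i with h1 | h1 <;> rcases hζ i with h2 | h2 <;>
      simp [hAdef, hBdef, hCdef, hDdef, Finset.mem_filter, h1, h2]
  have hsplit : ∀ g : Fin N → ℝ,
      ∑ j, g j = ∑ j ∈ A, g j + ∑ j ∈ B, g j + ∑ j ∈ C, g j + ∑ j ∈ D, g j := by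
    intro g
    have h1 : ∑ j, g j = ∑ j ∈ Finset.univ.filter (fun i => η i = 1), g j
        + ∑ j ∈ Finset.univ.filter (fun i => ¬ η i = 1), g j :=
      (Finset.sum_filter_add_sum_filter_not _ _ _).symm
    have h2 : ∑ j ∈ Finset.univ.filter (fun i => η i = 1), g j
        = ∑ j ∈ (Finset.univ.filter (fun i => η i = 1)).filter (fun i => ζ i = 1), g j
        + ∑ j ∈ (Finset.univ.filter (fun i => η i = 1)).filter (fun i => ¬ ζ i = 1), g j :=
      (Finset.sum_filter_add_sum_filter_not _ _ _).symm
    have h3 : ∑ j ∈ Finset.univ.filter (fun i => ¬ η i = 1), g j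
        = ∑ j ∈ (Finset.univ.filter (fun i => ¬ η i = 1)).filter (fun i => ζ i = 1), g j
        + ∑ j ∈ (Finset.univ.filter (fun i => ¬ η i = 1)).filter (fun i => ¬ ζ i = 1), g j :=
      (Finset.sum_filter_add_sum_filter_not _ _ _).symm
    rw [h1, h2, h3, Finset.filter_filter, Finset.filter_filter, Finset.filter_filter,
      Finset.filter_filter]
    have e2 : Finset.univ.filter (fun i => η i = 1 ∧ ¬ ζ i = 1) = C := by
      rw [hCdef]; apply Finset.filter_congr; intro i _; rw [hne _ (hζ i)]
    have e3 : Finset.univ.filter (fun i => ¬ η i = 1 ∧ ζ i = 1) = D := by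
      rw [hDdef]; apply Finset.filter_congr; intro i _; rw [hne _ (hη i)]
    have e4 : Finset.univ.filter (fun i => ¬ η i = 1 ∧ ¬ ζ i = 1) = B := by
      rw [hBdef]; apply Finset.filter_congr; intro i _; rw [hne _ (hη i), hne _ (hζ i)]
    rw [e2, e3, e4]
    ring
  set a : ℝ := (A.card : ℝ) with hadef
  set b : ℝ := (B.card : ℝ) with hbdef
  set c : ℝ := (C.card : ℝ) with hcdef
  set d : ℝ := (D.card : ℝ) with hddef
  have ha1 : 1 ≤ a := by
    rw [hadef]; exact_mod_cast Finset.card_pos.mpr hA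
  have hb1 : 1 ≤ b := by
    rw [hbdef]; exact_mod_cast Finset.card_pos.mpr hB
  have hc1 : 1 ≤ c := by
    rw [hcdef]; exact_mod_cast Finset.card_pos.mpr hC
  have hd1 : 1 ≤ d := by
    rw [hddef]; exact_mod_cast Finset.card_pos.mpr hD
  have hcs : ∀ (g : Fin N → ℝ) (v1 v2 v3 v4 : ℝ),
      (∀ i ∈ A, g i = v1) → (∀ i ∈ B, g i = v2) → (∀ i ∈ C, g i = v3) → (∀ i ∈ D, g i = v4) →
      ∑ j, g j = a*v1 + b*v2 + c*v3 + d*v4 := by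
    intro g v1 v2 v3 v4 g1 g2 g3 g4
    rw [hsplit g, Finset.sum_congr rfl g1, Finset.sum_congr rfl g2,
      Finset.sum_congr rfl g3, Finset.sum_congr rfl g4]
    simp [mul_comm, hadef, hbdef, hcdef, hddef]
  have habcd : a + b + c + d = (N:ℝ) := by
    have h0 := hcs (fun _ => (1:ℝ)) 1 1 1 1 (fun _ _ => rfl) (fun _ _ => rfl) (fun _ _ => rfl)
      (fun _ _ => rfl)
    simp at h0
    linarith
  -- card identities
  have hJ1c : ((Finset.univ.filter (fun j => η j = ζ j)).card : ℝ) = a + b := by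
    have h0 := hcs (fun i => if η i = ζ i then (1:ℝ) else 0) 1 1 0 0
      (fun i hi => by norm_num [(hmemA i hi).1, (hmemA i hi).2])
      (fun i hi => by norm_num [(hmemB i hi).1, (hmemB i hi).2])
      (fun i hi => by norm_num [(hmemC i hi).1, (hmemC i hi).2])
      (fun i hi => by norm_num [(hmemD i hi).1, (hmemD i hi).2])
    rw [Finset.sum_boole] at h0
    rw [h0]; ring
  have hJ2c : ((Finset.univ.filter (fun j => η j ≠ ζ j)).card : ℝ) = c + d := by
    have h0 := hcs (fun i => if η i ≠ ζ i then (1:ℝ) else 0) 0 0 1 1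
      (fun i hi => by norm_num [(hmemA i hi).1, (hmemA i hi).2])
      (fun i hi => by norm_num [(hmemB i hi).1, (hmemB i hi).2])
      (fun i hi => by norm_num [(hmemC i hi).1, (hmemC i hi).2])
      (fun i hi => by norm_num [(hmemD i hi).1, (hmemD i hi).2])
    rw [Finset.sum_boole] at h0
    rw [h0]; ring
  have hsη : ∑ j, η j = a - b + c - d := by
    have h0 := hcs η 1 (-1) 1 (-1) (fun i hi => (hmemA i hi).1) (fun i hi => (hmemB i hi).1)
      (fun i hi => (hmemC i hi).1) (fun i hi => (hmemD i hi).1)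
    linarith
  have hsζ : ∑ j, ζ j = a - b - c + d := by
    have h0 := hcs ζ 1 (-1) (-1) 1 (fun i hi => (hmemA i hi).2) (fun i hi => (hmemB i hi).2)
      (fun i hi => (hmemC i hi).2) (fun i hi => (hmemD i hi).2)
    linarith
  rw [hJ1c, hJ2c]
  -- Part 1 : existence of max eigenvector
  have hpart1 : ∃ x : Fin N → ℝ, x ≠ 0 ∧
      I.mulVec x = (max (|a + b - (c + d)| / N - 2 * ε) 0) • x := by
    rcases le_or_gt (|a + b - (c + d)|) (2*ε*(N:ℝ)) with hle | hgt
    · -- max is 0, constant eigenvector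
      have hmax : max (|a + b - (c + d)| / N - 2 * ε) 0 = 0 := by
        apply max_eq_right
        rw [sub_nonpos, div_le_iff₀ hN0]
        linarith
      rw [hmax]
      refine ⟨fun _ => 1, ?_, ?_⟩
      · intro h0
        obtain ⟨iA, _⟩ := hA
        have h1 := congrFun h0 iA
        norm_num at h1
      · funext i
        apply mul_left_cancel₀ hN0'
        rw [hstar]
        have h1 : ∑ j : Fin N, (fun _ => (1:ℝ)) j = (N:ℝ) := by simp
        have h2 : ∑ j : Fin N, η j * (fun _ => (1:ℝ)) j = ∑ j, η j := by simp
        have h3 : ∑ j : Fin N, ζ j * (fun _ => (1:ℝ)) j = ∑ j, ζ j := by simp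
        rw [h1, h2, h3]
        simp
        ring
    · -- max is |s|/N - 2ε > 0
      have hmaxpos : 0 < |a + b - (c + d)| / N - 2 * ε := by
        rw [sub_pos, lt_div_iff₀ hN0]
        linarith
      have hmax : max (|a + b - (c + d)| / N - 2 * ε) 0 = |a + b - (c + d)| / N - 2 * ε :=
        max_eq_left (le_of_lt hmaxpos)
      rw [hmax]
      rcases le_or_gt 0 (a + b - (c + d)) with hpos | hneg
      · -- s ≥ 0 : eigenvector supported on A ∪ B
        have habs : |a + b - (c + d)| = a + b - (c + d) := abs_of_nonneg hpos
        set x : Fin N → ℝ :=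
          fun i => if η i = 1 ∧ ζ i = 1 then -b else if η i = -1 ∧ ζ i = -1 then a else 0
          with hxdef
        have hxA : ∀ i ∈ A, x i = -b := by
          intro i hi; rw [hxdef]; simp only; rw [if_pos ⟨(hmemA i hi).1, (hmemA i hi).2⟩]
        have hxB : ∀ i ∈ B, x i = a := by
          intro i hi; rw [hxdef]; simp only
          rw [if_neg (by rw [(hmemB i hi).1]; norm_num), if_pos ⟨(hmemB i hi).1, (hmemB i hi).2⟩]
        have hxC : ∀ i ∈ C, x i = 0 := by
          intro i hi; rw [hxdef]; simp only
          rw [if_neg (by rw [(hmemC i hi).2]; norm_num),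
            if_neg (by rw [(hmemC i hi).1]; norm_num)]
        have hxD : ∀ i ∈ D, x i = 0 := by
          intro i hi; rw [hxdef]; simp only
          rw [if_neg (by rw [(hmemD i hi).1]; norm_num),
            if_neg (by rw [(hmemD i hi).2]; norm_num)]
        have hX : ∑ j, x j = a*(-b) + b*a + c*0 + d*0 := hcs x (-b) a 0 0 hxA hxB hxC hxD
        have hH : ∑ j, η j * x j = a*(-b) + b*(-a) + c*0 + d*0 :=
          hcs _ (-b) (-a) 0 0
            (fun i hi => by rw [(hmemA i hi).1, hxA i hi]; ring)
            (fun i hi => by rw [(hmemB i hi).1, hxB i hi]; ring)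
            (fun i hi => by rw [hxC i hi]; ring)
            (fun i hi => by rw [hxD i hi]; ring)
        have hZ : ∑ j, ζ j * x j = a*(-b) + b*(-a) + c*0 + d*0 :=
          hcs _ (-b) (-a) 0 0
            (fun i hi => by rw [(hmemA i hi).2, hxA i hi]; ring)
            (fun i hi => by rw [(hmemB i hi).2, hxB i hi]; ring)
            (fun i hi => by rw [hxC i hi]; ring)
            (fun i hi => by rw [hxD i hi]; ring)
        refine ⟨x, ?_, ?_⟩
        · intro h0
          obtain ⟨iB, hiB⟩ := hB
          have := congrFun h0 iB
          rw [hxB iB hiB] at this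
          simp at this
          linarith
        · funext i
          apply mul_left_cancel₀ hN0'
          rw [hstar, hX, hH, hZ, hsη, hsζ]
          have hrhs : (N:ℝ) * (((|a + b - (c + d)| / N - 2 * ε)) • x) i
              = (a + b - (c + d) - 2*ε*N) * x i := by
            simp only [Pi.smul_apply, smul_eq_mul]
            rw [habs, show (N:ℝ) * (((a + b - (c + d)) / ↑N - 2*ε) * x i)
              = ((a + b - (c + d)) / ↑N * ↑N - 2*ε*↑N) * x i from by ring,
              div_mul_cancel₀ _ hN0']
          rw [hrhs]
          rcases hcases i with hi | hi | hi | hi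
          · rw [hxA i hi, (hmemA i hi).1, (hmemA i hi).2, ← habcd]; ring
          · rw [hxB i hi, (hmemB i hi).1, (hmemB i hi).2, ← habcd]; ring
          · rw [hxC i hi, (hmemC i hi).1, (hmemC i hi).2, ← habcd]; ring
          · rw [hxD i hi, (hmemD i hi).1, (hmemD i hi).2, ← habcd]; ring
      · -- s < 0 : eigenvector supported on C ∪ D
        have habs : |a + b - (c + d)| = -(a + b - (c + d)) := abs_of_neg hneg
        set x : Fin N → ℝ :=
          fun i => if η i = 1 ∧ ζ i = -1 then -d else if η i = -1 ∧ ζ i = 1 then c else 0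
          with hxdef
        have hxA : ∀ i ∈ A, x i = 0 := by
          intro i hi; rw [hxdef]; simp only
          rw [if_neg (by rw [(hmemA i hi).2]; norm_num),
            if_neg (by rw [(hmemA i hi).1]; norm_num)]
        have hxB : ∀ i ∈ B, x i = 0 := by
          intro i hi; rw [hxdef]; simp only
          rw [if_neg (by rw [(hmemB i hi).1]; norm_num),
            if_neg (by rw [(hmemB i hi).2]; norm_num)]
        have hxC : ∀ i ∈ C, x i = -d := by
          intro i hi; rw [hxdef]; simp only; rw [if_pos ⟨(hmemC i hi).1, (hmemC i hi).2⟩]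
        have hxD : ∀ i ∈ D, x i = c := by
          intro i hi; rw [hxdef]; simp only
          rw [if_neg (by rw [(hmemD i hi).1]; norm_num), if_pos ⟨(hmemD i hi).1, (hmemD i hi).2⟩]
        have hX : ∑ j, x j = a*0 + b*0 + c*(-d) + d*c := hcs x 0 0 (-d) c hxA hxB hxC hxD
        have hH : ∑ j, η j * x j = a*0 + b*0 + c*(-d) + d*(-c) :=
          hcs _ 0 0 (-d) (-c)
            (fun i hi => by rw [hxA i hi]; ring)
            (fun i hi => by rw [hxB i hi]; ring)
            (fun i hi => by rw [(hmemC i hi).1, hxC i hi]; ring)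
            (fun i hi => by rw [(hmemD i hi).1, hxD i hi]; ring)
        have hZ : ∑ j, ζ j * x j = a*0 + b*0 + c*d + d*c :=
          hcs _ 0 0 d c
            (fun i hi => by rw [hxA i hi]; ring)
            (fun i hi => by rw [hxB i hi]; ring)
            (fun i hi => by rw [(hmemC i hi).2, hxC i hi]; ring)
            (fun i hi => by rw [(hmemD i hi).2, hxD i hi]; ring)
        refine ⟨x, ?_, ?_⟩
        · intro h0
          obtain ⟨iD, hiD⟩ := hD
          have := congrFun h0 iD
          rw [hxD iD hiD] at this
          simp at this
          linarith
        · funext i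
          apply mul_left_cancel₀ hN0'
          rw [hstar, hX, hH, hZ, hsη, hsζ]
          have hrhs : (N:ℝ) * (((|a + b - (c + d)| / N - 2 * ε)) • x) i
              = (-(a + b - (c + d)) - 2*ε*N) * x i := by
            simp only [Pi.smul_apply, smul_eq_mul]
            rw [habs, show (N:ℝ) * ((-(a + b - (c + d)) / ↑N - 2*ε) * x i)
              = (-(a + b - (c + d)) / ↑N * ↑N - 2*ε*↑N) * x i from by ring,
              div_mul_cancel₀ _ hN0']
          rw [hrhs]
          rcases hcases i with hi | hi | hi | hi
          · rw [hxA i hi, (hmemA i hi).1, (hmemA i hi).2, ← habcd]; ring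
          · rw [hxB i hi, (hmemB i hi).1, (hmemB i hi).2, ← habcd]; ring
          · rw [hxC i hi, (hmemC i hi).1, (hmemC i hi).2, ← habcd]; ring
          · rw [hxD i hi, (hmemD i hi).1, (hmemD i hi).2, ← habcd]; ring
  -- The engine: class-constancy and reduced linear equations
  have hengine : ∀ (T : ℝ) (x : Fin N → ℝ),
      a + b - (c + d) < T → -(a + b - (c + d)) < T →
      (∀ i, x i * (T + ↑N + η i * (a-b+c-d) + ζ i * (a-b-c+d))
          = (1+2*ε) * (∑ j, x j) + η i * (∑ j, η j * x j) + ζ i * (∑ j, ζ j * x j)) →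
      ∃ p u : ℝ, (∀ i ∈ A, x i = p) ∧ (∀ i ∈ B, x i = p) ∧ (∀ i ∈ C, x i = u) ∧
        (∀ i ∈ D, x i = u) ∧
        (T - 2*ε*↑N) * (a*p + b*p + c*u + d*u) = 0 ∧
        p * (T + ↑N) = (1+2*ε) * (a*p + b*p + c*u + d*u) ∧
        u * (T + ↑N) = (1+2*ε) * (a*p + b*p + c*u + d*u) := by
    intro T x hTs hTs' hpt
    have hRA : (0:ℝ) < T + ↑N + 1 * (a-b+c-d) + 1 * (a-b-c+d) := by linarith
    have hRB : (0:ℝ) < T + ↑N + -1 * (a-b+c-d) + -1 * (a-b-c+d) := by linarith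
    have hRC : (0:ℝ) < T + ↑N + 1 * (a-b+c-d) + -1 * (a-b-c+d) := by linarith
    have hRD : (0:ℝ) < T + ↑N + -1 * (a-b+c-d) + 1 * (a-b-c+d) := by linarith
    obtain ⟨iA, hiA⟩ := hA
    obtain ⟨iB, hiB⟩ := hB
    obtain ⟨iC, hiC⟩ := hC
    obtain ⟨iD, hiD⟩ := hD
    set p := x iA with hp
    set q := x iB with hq
    set u := x iC with hu
    set w := x iD with hw
    have hxA : ∀ i ∈ A, x i = p := by
      intro i hi
      have e1 := hpt i
      rw [(hmemA i hi).1, (hmemA i hi).2] at e1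
      have e2 := hpt iA
      rw [(hmemA iA hiA).1, (hmemA iA hiA).2] at e2
      exact mul_right_cancel₀ (ne_of_gt hRA) (e1.trans e2.symm)
    have hxB : ∀ i ∈ B, x i = q := by
      intro i hi
      have e1 := hpt i
      rw [(hmemB i hi).1, (hmemB i hi).2] at e1
      have e2 := hpt iB
      rw [(hmemB iB hiB).1, (hmemB iB hiB).2] at e2
      exact mul_right_cancel₀ (ne_of_gt hRB) (e1.trans e2.symm)
    have hxC : ∀ i ∈ C, x i = u := by
      intro i hi
      have e1 := hpt i
      rw [(hmemC i hi).1, (hmemC i hi).2] at e1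
      have e2 := hpt iC
      rw [(hmemC iC hiC).1, (hmemC iC hiC).2] at e2
      exact mul_right_cancel₀ (ne_of_gt hRC) (e1.trans e2.symm)
    have hxD : ∀ i ∈ D, x i = w := by
      intro i hi
      have e1 := hpt i
      rw [(hmemD i hi).1, (hmemD i hi).2] at e1
      have e2 := hpt iD
      rw [(hmemD iD hiD).1, (hmemD iD hiD).2] at e2
      exact mul_right_cancel₀ (ne_of_gt hRD) (e1.trans e2.symm)
    have hX : ∑ j, x j = a*p + b*q + c*u + d*w := hcs x p q u w hxA hxB hxC hxD
    have hH : ∑ j, η j * x j = a*p + b*(-q) + c*u + d*(-w) :=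
      hcs _ p (-q) u (-w)
        (fun i hi => by rw [(hmemA i hi).1, hxA i hi]; ring)
        (fun i hi => by rw [(hmemB i hi).1, hxB i hi]; ring)
        (fun i hi => by rw [(hmemC i hi).1, hxC i hi]; ring)
        (fun i hi => by rw [(hmemD i hi).1, hxD i hi]; ring)
    have hZ : ∑ j, ζ j * x j = a*p + b*(-q) + c*(-u) + d*w :=
      hcs _ p (-q) (-u) w
        (fun i hi => by rw [(hmemA i hi).2, hxA i hi]; ring)
        (fun i hi => by rw [(hmemB i hi).2, hxB i hi]; ring)
        (fun i hi => by rw [(hmemC i hi).2, hxC i hi]; ring)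
        (fun i hi => by rw [(hmemD i hi).2, hxD i hi]; ring)
    have f1 := hpt iA
    rw [(hmemA iA hiA).1, (hmemA iA hiA).2, hX, hH, hZ] at f1
    have f2 := hpt iB
    rw [(hmemB iB hiB).1, (hmemB iB hiB).2, hX, hH, hZ] at f2
    have f3 := hpt iC
    rw [(hmemC iC hiC).1, (hmemC iC hiC).2, hX, hH, hZ] at f3
    have f4 := hpt iD
    rw [(hmemD iD hiD).1, (hmemD iD hiD).2, hX, hH, hZ] at f4
    have hpq : p = q := by
      have h0 : (p - q) * (T - (a + b - (c + d))) = 0 := by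
        linear_combination f1 - f2 + (p - q) * habcd
      rcases mul_eq_zero.mp h0 with h0 | h0
      · linarith
      · linarith
    have huw : u = w := by
      have h0 : (u - w) * (T + (a + b - (c + d))) = 0 := by
        linear_combination f3 - f4 + (u - w) * habcd
      rcases mul_eq_zero.mp h0 with h0 | h0
      · linarith
      · linarith
    rw [← hpq] at f1 f3 hxB
    rw [← huw] at f1 f3 hxD
    have c6 : p * (T + ↑N) = (1+2*ε) * (a*p + b*p + c*u + d*u) := by linear_combination f1
    have c7 : u * (T + ↑N) = (1+2*ε) * (a*p + b*p + c*u + d*u) := by linear_combination f3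
    have c5 : (T - 2*ε*↑N) * (a*p + b*p + c*u + d*u) = 0 := by
      linear_combination (a+b)*c6 + (c+d)*c7 + (1+2*ε)*(a*p+b*p+c*u+d*u)*habcd
    exact ⟨p, u, hxA, hxB, hxC, hxD, c5, c6, c7⟩
  -- Part 2: eigenvalue bound
  have hpart2 : ∀ (μ : ℝ) (x : Fin N → ℝ), x ≠ 0 → I.mulVec x = μ • x →
      μ ≤ max (|a + b - (c + d)| / ↑N - 2 * ε) 0 := by
    intro μ x hx0 heig
    by_contra hcon
    push_neg at hcon
    have hμ0 : 0 < μ := lt_of_le_of_lt (le_max_right _ _) hcon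
    have hμs : |a + b - (c + d)| / ↑N - 2 * ε < μ := lt_of_le_of_lt (le_max_left _ _) hcon
    obtain ⟨T, hT⟩ : ∃ T : ℝ, T = ↑N * μ + 2*ε*↑N := ⟨_, rfl⟩
    have habsT : |a + b - (c + d)| < T := by
      rw [hT]
      have := (div_lt_iff₀ hN0).mp (by linarith : |a + b - (c + d)| / ↑N < μ + 2*ε)
      linarith
    have hTs : a + b - (c + d) < T := lt_of_le_of_lt (le_abs_self _) habsT
    have hTs' : -(a + b - (c + d)) < T := by
      have := neg_abs_le (a + b - (c + d)); linarith
    have hpt : ∀ i, x i * (T + ↑N + η i * (a-b+c-d) + ζ i * (a-b-c+d))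
        = (1+2*ε) * (∑ j, x j) + η i * (∑ j, η j * x j) + ζ i * (∑ j, ζ j * x j) := by
      intro i
      have h1 := hstar x i
      have h2 := congrFun heig i
      simp only [Pi.smul_apply, smul_eq_mul] at h2
      rw [h2, hsη, hsζ] at h1
      linear_combination h1 + x i * hT
    obtain ⟨p, u, hxA', hxB', hxC', hxD', c5, c6, c7⟩ := hengine T x hTs hTs' hpt
    have hT2 : T - 2*ε*↑N ≠ 0 := by
      rw [hT]
      have : 0 < ↑N * μ := mul_pos hN0 hμ0
      intro h0; linarith
    have hXz : a*p + b*p + c*u + d*u = 0 := by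
      rcases mul_eq_zero.mp c5 with h0 | h0
      · exact absurd h0 hT2
      · exact h0
    have hTN : 0 < T + ↑N := by
      rw [hT]; have : 0 < ↑N * μ := mul_pos hN0 hμ0; linarith [mul_pos (mul_pos two_pos hε) hN0]
    have hp0 : p = 0 := by
      have : p * (T + ↑N) = 0 := by rw [c6, hXz]; ring
      rcases mul_eq_zero.mp this with h0 | h0
      · exact h0
      · exact absurd h0 (ne_of_gt hTN)
    have hu0 : u = 0 := by
      have : u * (T + ↑N) = 0 := by rw [c7, hXz]; ring
      rcases mul_eq_zero.mp this with h0 | h0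
      · exact h0
      · exact absurd h0 (ne_of_gt hTN)
    apply hx0
    funext i
    rcases hcases i with hi | hi | hi | hi
    · rw [hxA' i hi, hp0]; rfl
    · rw [hxB' i hi, hp0]; rfl
    · rw [hxC' i hi, hu0]; rfl
    · rw [hxD' i hi, hu0]; rfl
  have habs2 : |(a + b) / ↑N - 1 / 2| = |a + b - (c + d)| / (2*↑N) := by
    have h0 : (a + b) / ↑N - 1 / 2 = (a + b - (c + d)) / (2*↑N) := by
      field_simp
      linear_combination habcd
    rw [h0, abs_div, abs_of_pos (by positivity : (0:ℝ) < 2*↑N)]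
  refine ⟨hpart1, hpart2, ?_, ?_⟩
  · -- Part 3
    intro hεlt
    rw [habs2] at hεlt
    have h2ε : 2*ε*↑N < |a + b - (c + d)| := by
      have := (lt_div_iff₀ (by positivity : (0:ℝ) < 2*↑N)).mp hεlt
      linarith
    have hpos : 0 < |a + b - (c + d)| / ↑N - 2 * ε := by
      rw [sub_pos, lt_div_iff₀ hN0]; linarith
    exact ⟨max (|a + b - (c + d)| / ↑N - 2 * ε) 0,
      lt_of_lt_of_le hpos (le_max_left _ _), hpart1⟩
  · -- Part 4
    intro hεgt
    rw [habs2] at hεgt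
    have h2ε : |a + b - (c + d)| < 2*ε*↑N := by
      have := (div_lt_iff₀ (by positivity : (0:ℝ) < 2*↑N)).mp hεgt
      linarith
    have hmax0 : max (|a + b - (c + d)| / ↑N - 2 * ε) 0 = 0 := by
      apply max_eq_right
      rw [sub_nonpos, div_le_iff₀ hN0]
      linarith
    constructor
    · intro μ x hx0 heig hμne
      have := hpart2 μ x hx0 heig
      rw [hmax0] at this
      exact lt_of_le_of_ne this hμne
    · intro x hker
      obtain ⟨T, hT⟩ : ∃ T : ℝ, T = 2*ε*↑N := ⟨_, rfl⟩
      rw [← hT] at h2ε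
      have hTs : a + b - (c + d) < T := lt_of_le_of_lt (le_abs_self _) h2ε
      have hTs' : -(a + b - (c + d)) < T := by
        have := neg_abs_le (a + b - (c + d)); linarith
      have hpt : ∀ i, x i * (T + ↑N + η i * (a-b+c-d) + ζ i * (a-b-c+d))
          = (1+2*ε) * (∑ j, x j) + η i * (∑ j, η j * x j) + ζ i * (∑ j, ζ j * x j) := by
        intro i
        have h1 := hstar x i
        have h2 := congrFun hker i
        simp only [Pi.zero_apply] at h2
        rw [h2, hsη, hsζ] at h1
        linear_combination h1 + x i * hT
      obtain ⟨p, u, hxA', hxB', hxC', hxD', c5, c6, c7⟩ := hengine T x hTs hTs' hpt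
      have hTN : 0 < T + ↑N := by
        rw [hT]; linarith [mul_pos (mul_pos two_pos hε) hN0]
      have hpu : p = u := by
        have h0 : (p - u) * (T + ↑N) = 0 := by linear_combination c6 - c7
        rcases mul_eq_zero.mp h0 with h0 | h0
        · linarith
        · exact absurd h0 (ne_of_gt hTN)
      refine ⟨p, funext fun i => ?_⟩
      rcases hcases i with hi | hi | hi | hi
      · rw [hxA' i hi]
      · rw [hxB' i hi]
      · rw [hxC' i hi, ← hpu]
      · rw [hxD' i hi, ← hpu]

set_option maxHeartbeats 2000000 in
/-- If J₁₁, J₁₂, J₂₁, J₂₂ are all nonempty, the maximum eigenvalue of I_{ξ¹} equals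
max(||J₁| − |J₂||/N − 2ε, 0); if ε < ||J₁|/N − 1/2| then I_{ξ¹} has a positive
eigenvalue, and if ε > ||J₁|/N − 1/2| then every eigenvalue other than the simple
eigenvalue 0 is negative. -/
theorem stmt_19 (N : ℕ) (hN : 1 ≤ N) (ε : ℝ) (hε : 0 < ε) (ξ1 ξ2 ξ3 : Fin N → ℝ)
    (hξ1 : ∀ i, ξ1 i = 1 ∨ ξ1 i = -1) (hξ2 : ∀ i, ξ2 i = 1 ∨ ξ2 i = -1)
    (hξ3 : ∀ i, ξ3 i = 1 ∨ ξ3 i = -1)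
    (h12 : ξ1 ≠ ξ2) (h12' : ξ1 ≠ -ξ2) (h13 : ξ1 ≠ ξ3) (h13' : ξ1 ≠ -ξ3)
    (h23 : ξ2 ≠ ξ3) (h23' : ξ2 ≠ -ξ3)
    (hJ11 : (Finset.univ.filter (fun j => ξ2 j = ξ3 j ∧ ξ1 j = ξ2 j)).Nonempty)
    (hJ12 : (Finset.univ.filter (fun j => ξ2 j = ξ3 j ∧ ξ1 j = -ξ2 j)).Nonempty)
    (hJ21 : (Finset.univ.filter (fun j => ξ2 j ≠ ξ3 j ∧ ξ1 j = ξ2 j)).Nonempty)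
    (hJ22 : (Finset.univ.filter (fun j => ξ2 j ≠ ξ3 j ∧ ξ1 j = -ξ2 j)).Nonempty)
    (S : Matrix (Fin N) (Fin N) ℝ)
    (hS : ∀ i j, S i j = ξ1 i * ξ1 j + ξ2 i * ξ2 j + ξ3 i * ξ3 j)
    (I : Matrix (Fin N) (Fin N) ℝ)
    (hI : ∀ i j, I i j =
      if i = j then
        -(1 / N) * (∑ k ∈ Finset.univ.erase i, S i k * ξ1 i * ξ1 k) - 2 * ε * (N - 1) / N
      else (1 / N) * (S i j * ξ1 i * ξ1 j) + 2 * ε / N) :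
    (∃ x : Fin N → ℝ, x ≠ 0 ∧
      I.mulVec x =
        (max (|((Finset.univ.filter (fun j => ξ2 j = ξ3 j)).card : ℝ) -
          ((Finset.univ.filter (fun j => ξ2 j ≠ ξ3 j)).card : ℝ)| / N - 2 * ε) 0) • x) ∧
    (∀ (μ : ℝ) (x : Fin N → ℝ), x ≠ 0 → I.mulVec x = μ • x →
      μ ≤ max (|((Finset.univ.filter (fun j => ξ2 j = ξ3 j)).card : ℝ) -
        ((Finset.univ.filter (fun j => ξ2 j ≠ ξ3 j)).card : ℝ)| / N - 2 * ε) 0) ∧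
    (ε < |((Finset.univ.filter (fun j => ξ2 j = ξ3 j)).card : ℝ) / N - 1 / 2| →
      ∃ μ : ℝ, 0 < μ ∧ ∃ x : Fin N → ℝ, x ≠ 0 ∧ I.mulVec x = μ • x) ∧
    (|((Finset.univ.filter (fun j => ξ2 j = ξ3 j)).card : ℝ) / N - 1 / 2| < ε →
      (∀ (μ : ℝ) (x : Fin N → ℝ), x ≠ 0 → I.mulVec x = μ • x → μ ≠ 0 → μ < 0) ∧
      (∀ x : Fin N → ℝ, I.mulVec x = 0 → ∃ c : ℝ, x = fun _ => c)) := by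
  classical
  have hN0 : (0:ℝ) < (N:ℝ) := by exact_mod_cast Nat.lt_of_lt_of_le Nat.zero_lt_one hN
  have hN0' : (N:ℝ) ≠ 0 := ne_of_gt hN0
  have hsq1 : ∀ i, ξ1 i * ξ1 i = 1 := by
    intro i; rcases hξ1 i with h | h <;> rw [h] <;> norm_num
  have hsq2 : ∀ i, ξ2 i * ξ2 i = 1 := by
    intro i; rcases hξ2 i with h | h <;> rw [h] <;> norm_num
  have hsq3 : ∀ i, ξ3 i * ξ3 i = 1 := by
    intro i; rcases hξ3 i with h | h <;> rw [h] <;> norm_num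
  set η : Fin N → ℝ := fun i => ξ1 i * ξ2 i with hηdef
  set ζ : Fin N → ℝ := fun i => ξ1 i * ξ3 i with hζdef
  have hη : ∀ i, η i = 1 ∨ η i = -1 := by
    intro i; simp only [hηdef]
    rcases hξ1 i with h1 | h1 <;> rcases hξ2 i with h2 | h2 <;> rw [h1, h2] <;> norm_num
  have hζ : ∀ i, ζ i = 1 ∨ ζ i = -1 := by
    intro i; simp only [hζdef]
    rcases hξ1 i with h1 | h1 <;> rcases hξ3 i with h2 | h2 <;> rw [h1, h2] <;> norm_num
  have hη2 : ∀ k, η k * η k = 1 := by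
    intro k; simp only [hηdef]
    linear_combination (ξ2 k * ξ2 k) * hsq1 k + hsq2 k
  have hζ2 : ∀ k, ζ k * ζ k = 1 := by
    intro k; simp only [hζdef]
    linear_combination (ξ3 k * ξ3 k) * hsq1 k + hsq3 k
  have hSij : ∀ i j, S i j * ξ1 i * ξ1 j = 1 + η i * η j + ζ i * ζ j := by
    intro i j
    simp only [hηdef, hζdef]
    rw [hS i j]
    linear_combination (ξ1 j * ξ1 j) * hsq1 i + hsq1 j
  -- the master pointwise identity
  have hstar : ∀ (x : Fin N → ℝ) (i : Fin N), (N : ℝ) * I.mulVec x i =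
      (1 + 2*ε) * (∑ j, x j) + η i * (∑ j, η j * x j) + ζ i * (∑ j, ζ j * x j)
      - x i * ((N : ℝ)*(1 + 2*ε) + η i * (∑ j, η j) + ζ i * (∑ j, ζ j)) := by
    intro x i
    have hmv : I.mulVec x i = ∑ j, I i j * x j := by
      simp [Matrix.mulVec, dotProduct]
    have hsplit1 : ∑ j, I i j * x j
        = (∑ j ∈ Finset.univ.erase i, I i j * x j) + I i i * x i :=
      (Finset.sum_erase_add _ _ (Finset.mem_univ i)).symm
    have hoffsum : (N:ℝ) * ∑ j ∈ Finset.univ.erase i, I i j * x j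
        = ∑ j ∈ Finset.univ.erase i, (1 + η i * η j + ζ i * ζ j + 2*ε) * x j := by
      rw [Finset.mul_sum]
      refine Finset.sum_congr rfl (fun j hj => ?_)
      have hij : ¬ i = j := fun h => (Finset.ne_of_mem_erase hj) h.symm
      rw [hI i j, if_neg hij, hSij i j]
      field_simp
    have herase : ∑ j ∈ Finset.univ.erase i, (1 + η i * η j + ζ i * ζ j + 2*ε) * x j
        = (∑ j, (1 + η i * η j + ζ i * ζ j + 2*ε) * x j) - (3 + 2*ε) * x i := by
      rw [← Finset.sum_erase_add Finset.univ _ (Finset.mem_univ i), hη2 i, hζ2 i]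
      ring
    have hfull : ∑ j, (1 + η i * η j + ζ i * ζ j + 2*ε) * x j
        = (1+2*ε) * (∑ j, x j) + η i * (∑ j, η j * x j) + ζ i * (∑ j, ζ j * x j) := by
      have hterm : ∀ j, (1 + η i * η j + ζ i * ζ j + 2*ε) * x j
          = (1+2*ε) * x j + η i * (η j * x j) + ζ i * (ζ j * x j) := fun j => by ring
      rw [Finset.sum_congr rfl (fun j _ => hterm j), Finset.sum_add_distrib,
        Finset.sum_add_distrib, ← Finset.mul_sum, ← Finset.mul_sum, ← Finset.mul_sum]
    have hdiagsum : ∑ k ∈ Finset.univ.erase i, S i k * ξ1 i * ξ1 k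
        = (N:ℝ) + η i * (∑ j, η j) + ζ i * (∑ j, ζ j) - 3 := by
      have e1 : ∑ k ∈ Finset.univ.erase i, S i k * ξ1 i * ξ1 k
          = ∑ k ∈ Finset.univ.erase i, (1 + η i * η k + ζ i * ζ k) :=
        Finset.sum_congr rfl (fun k _ => hSij i k)
      have e2 : ∑ k ∈ Finset.univ.erase i, (1 + η i * η k + ζ i * ζ k)
          = (∑ k, (1 + η i * η k + ζ i * ζ k)) - 3 := by
        rw [← Finset.sum_erase_add Finset.univ _ (Finset.mem_univ i), hη2 i, hζ2 i]
        ring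
      have e3 : ∑ k : Fin N, (1 + η i * η k + ζ i * ζ k)
          = (N:ℝ) + η i * (∑ j, η j) + ζ i * (∑ j, ζ j) := by
        rw [Finset.sum_add_distrib, Finset.sum_add_distrib, ← Finset.mul_sum, ← Finset.mul_sum]
        simp
      rw [e1, e2, e3]
    rw [hmv, hsplit1, mul_add, hoffsum, herase, hfull, hI i i, if_pos rfl, hdiagsum]
    field_simp
    ring
  -- translate the filters
  have hiffA : ∀ j, (ξ2 j = ξ3 j ∧ ξ1 j = ξ2 j) ↔ (η j = 1 ∧ ζ j = 1) := by
    intro j; simp only [hηdef, hζdef]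
    rcases hξ1 j with h1 | h1 <;> rcases hξ2 j with h2 | h2 <;> rcases hξ3 j with h3 | h3 <;>
      rw [h1, h2, h3] <;> norm_num
  have hiffB : ∀ j, (ξ2 j = ξ3 j ∧ ξ1 j = -ξ2 j) ↔ (η j = -1 ∧ ζ j = -1) := by
    intro j; simp only [hηdef, hζdef]
    rcases hξ1 j with h1 | h1 <;> rcases hξ2 j with h2 | h2 <;> rcases hξ3 j with h3 | h3 <;>
      rw [h1, h2, h3] <;> norm_num
  have hiffC : ∀ j, (ξ2 j ≠ ξ3 j ∧ ξ1 j = ξ2 j) ↔ (η j = 1 ∧ ζ j = -1) := by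
    intro j; simp only [hηdef, hζdef]
    rcases hξ1 j with h1 | h1 <;> rcases hξ2 j with h2 | h2 <;> rcases hξ3 j with h3 | h3 <;>
      rw [h1, h2, h3] <;> norm_num
  have hiffD : ∀ j, (ξ2 j ≠ ξ3 j ∧ ξ1 j = -ξ2 j) ↔ (η j = -1 ∧ ζ j = 1) := by
    intro j; simp only [hηdef, hζdef]
    rcases hξ1 j with h1 | h1 <;> rcases hξ2 j with h2 | h2 <;> rcases hξ3 j with h3 | h3 <;>
      rw [h1, h2, h3] <;> norm_num
  have hiff1 : ∀ j, (ξ2 j = ξ3 j) ↔ (η j = ζ j) := by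
    intro j; simp only [hηdef, hζdef]
    rcases hξ1 j with h1 | h1 <;> rcases hξ2 j with h2 | h2 <;> rcases hξ3 j with h3 | h3 <;>
      rw [h1, h2, h3] <;> norm_num
  have hfA : Finset.univ.filter (fun j => ξ2 j = ξ3 j ∧ ξ1 j = ξ2 j)
      = Finset.univ.filter (fun i => η i = 1 ∧ ζ i = 1) :=
    Finset.filter_congr (fun j _ => hiffA j)
  have hfB : Finset.univ.filter (fun j => ξ2 j = ξ3 j ∧ ξ1 j = -ξ2 j)
      = Finset.univ.filter (fun i => η i = -1 ∧ ζ i = -1) :=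
    Finset.filter_congr (fun j _ => hiffB j)
  have hfC : Finset.univ.filter (fun j => ξ2 j ≠ ξ3 j ∧ ξ1 j = ξ2 j)
      = Finset.univ.filter (fun i => η i = 1 ∧ ζ i = -1) :=
    Finset.filter_congr (fun j _ => hiffC j)
  have hfD : Finset.univ.filter (fun j => ξ2 j ≠ ξ3 j ∧ ξ1 j = -ξ2 j)
      = Finset.univ.filter (fun i => η i = -1 ∧ ζ i = 1) :=
    Finset.filter_congr (fun j _ => hiffD j)
  have hf1 : Finset.univ.filter (fun j => ξ2 j = ξ3 j)
      = Finset.univ.filter (fun j => η j = ζ j) :=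
    Finset.filter_congr (fun j _ => hiff1 j)
  have hf2 : Finset.univ.filter (fun j => ξ2 j ≠ ξ3 j)
      = Finset.univ.filter (fun j => η j ≠ ζ j) :=
    Finset.filter_congr (fun j _ => not_congr (hiff1 j))
  rw [hfA] at hJ11
  rw [hfB] at hJ12
  rw [hfC] at hJ21
  rw [hfD] at hJ22
  rw [hf1, hf2]
  exact key N hN ε hε η ζ hη hζ hJ11 hJ12 hJ21 hJ22 I hstar
end
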